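/- arXiv:2109.01906 — 2 statements merged into one kernel-verified Lean document; each statement's English description precedes it below -/
import Mathlib

section
/- Let X be an almost transitive Banach space whose norm is equivalent to a norm induced by an inner product (an almost transitive renorming of a Hilbert space). Then for every x ∈ X there is a unique functional J(x) ∈ X* with ⟨J(x), x⟩ = ‖x‖² and ‖J(x)‖ = ‖x‖, and the resulting duality map J : X → X* is a bijection such that both J and its inverse J⁻¹ : X* → X are Lipschitz. -/
/-- A function `n` is a norm coming from an inner product iff it is a norm
satisfying the parallelogram law. -/
def IsEuclideanNorm {X : Type*} [AddCommGroup X] [Module ℝ X] (n : X → ℝ) : Prop :=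
  (∀ z : X, 0 ≤ n z) ∧ (∀ z : X, n z = 0 ↔ z = 0) ∧
  (∀ (c : ℝ) (z : X), n (c • z) = |c| * n z) ∧
  (∀ u v : X, n (u + v) ≤ n u + n v) ∧
  (∀ u v : X, n (u + v) ^ 2 + n (u - v) ^ 2 = 2 * n u ^ 2 + 2 * n v ^ 2)

/-- The norm of `X` is equivalent to a norm induced by an inner product. -/
def IsHilbertRenorming (X : Type*) [NormedAddCommGroup X] [Module ℝ X] : Prop :=
  ∃ n : X → ℝ, IsEuclideanNorm n ∧
    ∃ a > (0 : ℝ), ∃ b > (0 : ℝ), ∀ z : X, a * ‖z‖ ≤ n z ∧ n z ≤ b * ‖z‖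

/-- The point `x` of the unit sphere admits an inner ellipsoid: an equivalent
inner-product norm `n` with `‖z‖ ≤ n z` everywhere and `n x = 1`. -/
def InnerEllipsoidAt {X : Type*} [NormedAddCommGroup X] [Module ℝ X] (x : X) : Prop :=
  ∃ n : X → ℝ, IsEuclideanNorm n ∧ (∃ b > (0 : ℝ), ∀ z : X, n z ≤ b * ‖z‖) ∧
    (∀ z : X, ‖z‖ ≤ n z) ∧ n x = 1

/-- The point `x` of the unit sphere admits an outer ellipsoid: an equivalent
inner-product norm `n` with `n z ≤ ‖z‖` everywhere and `n x = 1`. -/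
def OuterEllipsoidAt {X : Type*} [NormedAddCommGroup X] [Module ℝ X] (x : X) : Prop :=
  ∃ n : X → ℝ, IsEuclideanNorm n ∧ (∃ a > (0 : ℝ), ∀ z : X, a * ‖z‖ ≤ n z) ∧
    (∀ z : X, n z ≤ ‖z‖) ∧ n x = 1


open Filter Topology

section Polar

variable {X : Type*} [NormedAddCommGroup X] [NormedSpace ℝ X]

/-- Cauchy-Schwarz for a symmetric bilinear-ish form with nonnegative diagonal. -/
lemma atdm_cs (B : X → X → ℝ)
    (hsym : ∀ u v, B u v = B v u)
    (haddl : ∀ u v w, B (u + v) w = B u w + B v w)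
    (hsmull : ∀ (t : ℝ) u v, B (t • u) v = t * B u v)
    (hpos : ∀ z, 0 ≤ B z z) :
    ∀ u v, (B u v) ^ 2 ≤ B u u * B v v := by
  have haddr : ∀ u v w, B u (v + w) = B u v + B u w := fun u v w => by
    rw [hsym, haddl, hsym v u, hsym w u]
  have hsmulr : ∀ (t : ℝ) u v, B u (t • v) = t * B u v := fun t u v => by
    rw [hsym, hsmull, hsym]
  intro u v
  have hexp : ∀ t : ℝ, B (u + t • v) (u + t • v)
      = B u u + 2 * t * B u v + t ^ 2 * B v v := by
    intro t
    simp only [haddl, haddr, hsmull, hsmulr]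
    rw [hsym v u]; ring
  have key : ∀ t : ℝ, 0 ≤ B u u + 2 * t * B u v + t ^ 2 * B v v := fun t => by
    rw [← hexp t]; exact hpos _
  rcases eq_or_ne (B v v) 0 with hv | hv
  · have hbv : B u v = 0 := by
      by_contra hne
      have h1 := key ((-(B u u) - 1) / (2 * B u v))
      rw [hv] at h1
      have h2 : 2 * ((-(B u u) - 1) / (2 * B u v)) * B u v = -(B u u) - 1 := by
        field_simp
      linarith
    rw [hbv, hv]
    nlinarith [key 0]
  · have hvpos : 0 < B v v := lt_of_le_of_ne (hpos v) (Ne.symm hv)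
    have h1 := key (-(B u v) / B v v)
    have h2 : 2 * (-(B u v) / B v v) * B u v + (-(B u v) / B v v) ^ 2 * B v v
        = -((B u v) ^ 2) / B v v := by
      field_simp; ring
    have h1' : 0 ≤ (B u u + 2 * (-(B u v) / B v v) * B u v + (-(B u v) / B v v) ^ 2 * B v v) * B v v :=
      mul_nonneg h1 hvpos.le
    have h2' : (B u u + 2 * (-(B u v) / B v v) * B u v + (-(B u v) / B v v) ^ 2 * B v v) * B v v
        = B u u * B v v - (B u v) ^ 2 := by
      field_simp; ring
    linarith

/-- Jordan–von Neumann: from a quadratic function build the polarization form. -/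
lemma atdm_polar (Q : X → ℝ) (C : ℝ) (hC : 0 ≤ C)
    (hpar : ∀ u v, Q (u + v) + Q (u - v) = 2 * Q u + 2 * Q v)
    (hhom : ∀ (t : ℝ) (z : X), Q (t • z) = t ^ 2 * Q z)
    (hlip : ∀ u v : X, |Q u - Q v| ≤ C * ‖u - v‖ * (‖u‖ + ‖v‖ + 1)) :
    ∃ B : X → X → ℝ, (∀ u v, B u v = B v u) ∧
      (∀ u v w, B (u + v) w = B u w + B v w) ∧
      (∀ (t : ℝ) u v, B (t • u) v = t * B u v) ∧
      (∀ z, B z z = Q z) := by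
  classical
  set B : X → X → ℝ := fun u v => (Q (u + v) - Q (u - v)) / 4 with hBdef
  have hQ0 : Q 0 = 0 := by
    have := hhom 0 0; simpa using this
  have hQneg : ∀ z, Q (-z) = Q z := fun z => by
    have := hhom (-1) z; simpa using this
  have hsym : ∀ u v, B u v = B v u := by
    intro u v
    simp only [hBdef]
    rw [add_comm u v, show u - v = -(v - u) by abel, hQneg]
  have hdiag : ∀ z, B z z = Q z := by
    intro z
    simp only [hBdef, sub_self, hQ0]
    have h2 : Q (z + z) = 4 * Q z := by
      have := hhom 2 z
      rw [two_smul] at this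
      nlinarith [this]
    rw [h2]; ring
  have hQhalf : ∀ z, Q ((1/2 : ℝ) • z) = Q z / 4 := fun z => by
    rw [hhom]; ring
  have hpair : ∀ p q : X, Q p + Q q = (Q (p + q) + Q (p - q)) / 2 := by
    intro p q
    have hsum : (1/2 : ℝ) • (p + q) + (1/2 : ℝ) • (p - q) = p := by module
    have hdiff : (1/2 : ℝ) • (p + q) - (1/2 : ℝ) • (p - q) = q := by module
    have := hpar ((1/2 : ℝ) • (p + q)) ((1/2 : ℝ) • (p - q))
    rw [hsum, hdiff, hQhalf, hQhalf] at this
    linarith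
  have hmid : ∀ u v w, B u v + B u w = 2 * B u ((1/2 : ℝ) • (v + w)) := by
    intro u v w
    have h1 := hpair (u + v) (u + w)
    have h2 := hpair (u - v) (u - w)
    have e1 : (u + v) + (u + w) = (2 : ℝ) • (u + (1/2 : ℝ) • (v + w)) := by module
    have e2 : (u + v) - (u + w) = v - w := by abel
    have e3 : (u - v) + (u - w) = (2 : ℝ) • (u - (1/2 : ℝ) • (v + w)) := by module
    have e4 : (u - v) - (u - w) = -(v - w) := by abel
    rw [e1, e2] at h1
    rw [e3, e4, hQneg] at h2
    rw [hhom] at h1 h2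
    have e5 : u + (1/2 : ℝ) • (v + w) = u + (1/2:ℝ) • (v+w) := rfl
    have e6 : u - (1/2 : ℝ) • (v + w) = u + (-((1/2:ℝ) • (v+w))) := by abel
    simp only [hBdef]
    have e7 : u - (1/2:ℝ) • (v+w) = u - (1/2:ℝ) • (v+w) := rfl
    nlinarith [h1, h2]
  have hB0 : ∀ u, B u 0 = 0 := fun u => by
    simp only [hBdef, add_zero, sub_zero, sub_self]
    norm_num
  have hhalfr : ∀ u v, B u ((1/2 : ℝ) • v) = B u v / 2 := by
    intro u v
    have := hmid u v 0
    rw [hB0, add_zero, add_zero] at this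
    linarith
  have haddr : ∀ u v w, B u (v + w) = B u v + B u w := by
    intro u v w
    rw [hmid u v w, hhalfr]
    ring
  -- boundedness of B in second variable
  have hBbound : ∀ u v : X, |B u v| ≤ C * (2 * ‖v‖) * (‖u‖ + ‖v‖ + 1) / 2 := by
    intro u v
    have h := hlip (u + v) (u - v)
    have he : (u + v) - (u - v) = v + v := by abel
    have hn1 : ‖(u+v) - (u-v)‖ ≤ 2 * ‖v‖ := by
      rw [he]
      calc ‖v + v‖ ≤ ‖v‖ + ‖v‖ := norm_add_le _ _
        _ = 2 * ‖v‖ := by ring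
    have hn2 : ‖u + v‖ + ‖u - v‖ + 1 ≤ 2 * (‖u‖ + ‖v‖ + 1) := by
      have h1 := norm_add_le u v
      have h2 := norm_sub_le u v
      linarith
    have hb : |Q (u+v) - Q (u-v)| ≤ C * (2*‖v‖) * (2 * (‖u‖ + ‖v‖ + 1)) := by
      calc |Q (u+v) - Q (u-v)| ≤ C * ‖(u+v)-(u-v)‖ * (‖u+v‖ + ‖u-v‖ + 1) := h
        _ ≤ C * (2*‖v‖) * (2 * (‖u‖ + ‖v‖ + 1)) := by
            apply mul_le_mul
            · exact mul_le_mul_of_nonneg_left hn1 hC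
            · exact hn2
            · positivity
            · positivity
    have h4 : |B u v| = |Q (u+v) - Q (u-v)| / 4 := by
      simp only [hBdef, abs_div]
      norm_num
    rw [h4]
    rw [div_le_iff₀ (by norm_num : (0:ℝ) < 4)]
    calc |Q (u+v) - Q (u-v)| ≤ C * (2*‖v‖) * (2 * (‖u‖ + ‖v‖ + 1)) := hb
      _ = C * (2 * ‖v‖) * (‖u‖ + ‖v‖ + 1) / 2 * 4 := by ring
  -- real homogeneity in the second variable
  have hsmulr : ∀ (t : ℝ) u v, B u (t • v) = t * B u v := by
    intro t u v
    set fA : ℝ →+ ℝ := AddMonoidHom.mk' (fun s => B u (s • v)) (by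
      intro s r
      show B u ((s + r) • v) = B u (s • v) + B u (r • v)
      rw [add_smul, haddr]) with hfA
    have hfAs : ∀ s : ℝ, fA s = B u (s • v) := fun s => rfl
    have hfA1 : fA 1 = B u v := by rw [hfAs, one_smul]
    have hrat : ∀ q : ℚ, fA (q : ℝ) = (q : ℝ) * B u v := by
      intro q
      have := map_ratCast_smul fA ℝ ℝ q (1 : ℝ)
      rw [smul_eq_mul, smul_eq_mul, mul_one] at this
      rw [this, hfA1]
    set D : ℝ := C * ‖v‖ * (‖u‖ + (2 * |t| + 1) * ‖v‖ + 1) + 1 with hD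
    have hDpos : 0 < D := by positivity
    have hflip : ∀ s : ℝ, |s| ≤ |t| + 1 → |fA t - fA s| ≤ |t - s| * D := by
      intro s hs
      have h0 : fA t - fA s = B u ((t - s) • v) := by
        rw [← map_sub, hfAs]
      rw [h0]
      have hb := hBbound u ((t - s) • v)
      have hnv : ‖(t-s) • v‖ = |t-s| * ‖v‖ := by
        rw [norm_smul, Real.norm_eq_abs]
      have hts : |t - s| ≤ 2 * |t| + 1 := by
        calc |t - s| ≤ |t| + |s| := abs_sub _ _
          _ ≤ 2 * |t| + 1 := by linarith
      have hr : |t-s| * ‖v‖ ≤ (2*|t|+1) * ‖v‖ := mul_le_mul_of_nonneg_right hts (norm_nonneg v)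
      have hfac : ‖u‖ + |t-s| * ‖v‖ + 1 ≤ ‖u‖ + (2*|t|+1) * ‖v‖ + 1 := by linarith
      have hCv : 0 ≤ C * ‖v‖ := mul_nonneg hC (norm_nonneg v)
      calc |B u ((t-s) • v)| ≤ C * (2 * ‖(t-s)•v‖) * (‖u‖ + ‖(t-s)•v‖ + 1) / 2 := hb
        _ = |t-s| * (C * ‖v‖ * (‖u‖ + |t-s| * ‖v‖ + 1)) := by rw [hnv]; ring
        _ ≤ |t-s| * (C * ‖v‖ * (‖u‖ + (2*|t|+1) * ‖v‖ + 1)) := by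
            apply mul_le_mul_of_nonneg_left _ (abs_nonneg _)
            exact mul_le_mul_of_nonneg_left hfac hCv
        _ ≤ |t - s| * D := by
            apply mul_le_mul_of_nonneg_left _ (abs_nonneg _)
            rw [hD]; linarith
    have hkey : ∀ ε : ℝ, 0 < ε → |fA t - t * B u v| ≤ ε := by
      intro ε hε
      have hDB : (0:ℝ) < D + |B u v| + 1 := by positivity
      obtain ⟨q, hq⟩ := exists_rat_near t (lt_min one_pos (div_pos hε hDB))
      have hq1 : |t - (q:ℝ)| < 1 := lt_of_lt_of_le hq (min_le_left _ _)
      have hq2 : |t - (q:ℝ)| ≤ ε / (D + |B u v| + 1) := le_of_lt (lt_of_lt_of_le hq (min_le_right _ _))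
      have hqs : |(q:ℝ)| ≤ |t| + 1 := by
        have h := abs_sub_abs_le_abs_sub (q:ℝ) t
        rw [abs_sub_comm] at h
        linarith
      have h1 := hflip (q:ℝ) hqs
      rw [hrat q] at h1
      have h2 : fA t - t * B u v = (fA t - (q:ℝ) * B u v) + (((q:ℝ) : ℝ) - t) * B u v := by ring
      have h3 : |fA t - t * B u v| ≤ |t - (q:ℝ)| * D + |t - (q:ℝ)| * |B u v| := by
        rw [h2]
        calc |(fA t - (q:ℝ) * B u v) + ((q:ℝ) - t) * B u v|
            ≤ |fA t - (q:ℝ) * B u v| + |((q:ℝ) - t) * B u v| := abs_add_le _ _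
          _ ≤ |t - (q:ℝ)| * D + |t - (q:ℝ)| * |B u v| := by
              rw [abs_mul, abs_sub_comm (q:ℝ) t]
              exact add_le_add h1 le_rfl
      have h5 : |t - (q:ℝ)| * (D + |B u v| + 1) ≤ ε := (le_div_iff₀ hDB).mp hq2
      have h6 : |t - (q:ℝ)| * D + |t - (q:ℝ)| * |B u v| ≤ |t - (q:ℝ)| * (D + |B u v| + 1) := by
        nlinarith [abs_nonneg (t - (q:ℝ))]
      linarith
    have h0 : |fA t - t * B u v| ≤ 0 := by
      apply le_of_forall_pos_le_add
      intro ε hε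
      have := hkey ε hε
      linarith
    have heq : fA t - t * B u v = 0 := by
      have := abs_nonneg (fA t - t * B u v)
      have : |fA t - t * B u v| = 0 := le_antisymm h0 this
      exact abs_eq_zero.mp this
    have := hfAs t
    linarith [heq, this.symm.le]
  refine ⟨B, hsym, ?_, ?_, hdiag⟩
  · intro u v w
    rw [hsym, haddr, hsym w u, hsym w v]
  · intro t u v
    rw [hsym, hsmulr, hsym]

end Polar


section LimitForm

variable {X : Type*} [NormedAddCommGroup X] [NormedSpace ℝ X]

lemma atdm_cs' : True := trivial

lemma atdm_limit_form
    (atdm_polar : ∀ (Q : X → ℝ) (C : ℝ), 0 ≤ C →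
      (∀ u v, Q (u + v) + Q (u - v) = 2 * Q u + 2 * Q v) →
      (∀ (t : ℝ) (z : X), Q (t • z) = t ^ 2 * Q z) →
      (∀ u v : X, |Q u - Q v| ≤ C * ‖u - v‖ * (‖u‖ + ‖v‖ + 1)) →
      ∃ B : X → X → ℝ, (∀ u v, B u v = B v u) ∧
        (∀ u v w, B (u + v) w = B u w + B v w) ∧
        (∀ (t : ℝ) u v, B (t • u) v = t * B u v) ∧
        (∀ z, B z z = Q z))
    (g : ℕ → X → ℝ) (α β : ℝ) (hα : 0 < α) (hβ : 0 < β)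
    (hgpar : ∀ k u v, g k (u + v) ^ 2 + g k (u - v) ^ 2 = 2 * g k u ^ 2 + 2 * g k v ^ 2)
    (hghom : ∀ k (t : ℝ) (z : X), g k (t • z) = |t| * g k z)
    (hgsub : ∀ k (u v : X), g k (u + v) ≤ g k u + g k v)
    (hlb : ∀ k z, α * ‖z‖ ≤ g k z) (hub : ∀ k z, g k z ≤ β * ‖z‖)
    (x : X) (r : ℝ) (hconv : Tendsto (fun k => g k x) atTop (nhds r)) :
    ∃ B : X → X → ℝ, (∀ u v, B u v = B v u) ∧
      (∀ u v w, B (u + v) w = B u w + B v w) ∧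
      (∀ (t : ℝ) u v, B (t • u) v = t * B u v) ∧
      (∀ z, α ^ 2 * ‖z‖ ^ 2 ≤ B z z ∧ B z z ≤ β ^ 2 * ‖z‖ ^ 2) ∧
      B x x = r ^ 2 := by
  classical
  set U : Ultrafilter ℕ := Ultrafilter.of atTop with hUdef
  have hUle : (U : Filter ℕ) ≤ atTop := Ultrafilter.of_le _
  have hnn : ∀ k (z : X), 0 ≤ g k z := fun k z =>
    le_trans (by positivity) (hlb k z)
  have hex : ∀ z : X, ∃ q : ℝ, Tendsto (fun k => (g k z) ^ 2) (U : Filter ℕ) (nhds q) := by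
    intro z
    have hmem : ∀ k, (g k z) ^ 2 ∈ Set.Icc (0 : ℝ) ((β * ‖z‖) ^ 2) := fun k =>
      ⟨sq_nonneg _, by nlinarith [hub k z, hnn k z]⟩
    have hcpt : IsCompact (Set.Icc (0 : ℝ) ((β * ‖z‖) ^ 2)) := isCompact_Icc
    have hle : (Ultrafilter.map (fun k => (g k z) ^ 2) U : Filter ℝ)
        ≤ Filter.principal (Set.Icc (0 : ℝ) ((β * ‖z‖) ^ 2)) := by
      rw [le_principal_iff]
      exact Filter.mem_map.mpr (Filter.univ_mem' hmem)
    obtain ⟨q, _, hq⟩ := hcpt.ultrafilter_le_nhds (Ultrafilter.map (fun k => (g k z) ^ 2) U) hle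
    refine ⟨q, ?_⟩
    rwa [Filter.Tendsto, ← Ultrafilter.coe_map]
  choose Q hQ using hex
  have hqpar : ∀ u v, Q (u + v) + Q (u - v) = 2 * Q u + 2 * Q v := by
    intro u v
    have h1 : Tendsto (fun k => (g k (u+v))^2 + (g k (u-v))^2) (U : Filter ℕ)
        (nhds (Q (u+v) + Q (u-v))) := (hQ _).add (hQ _)
    have h2 : Tendsto (fun k => 2 * (g k u)^2 + 2 * (g k v)^2) (U : Filter ℕ)
        (nhds (2 * Q u + 2 * Q v)) := ((hQ u).const_mul 2).add ((hQ v).const_mul 2)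
    have heq : (fun k => (g k (u+v))^2 + (g k (u-v))^2)
        = fun k => 2 * (g k u)^2 + 2 * (g k v)^2 := funext fun k => hgpar k u v
    rw [heq] at h1
    exact tendsto_nhds_unique h1 h2
  have hqhom : ∀ (t : ℝ) (z : X), Q (t • z) = t ^ 2 * Q z := by
    intro t z
    have h1 := hQ (t • z)
    have heq : (fun k => (g k (t • z))^2) = fun k => t^2 * (g k z)^2 := by
      funext k
      rw [hghom k t z, mul_pow, sq_abs]
    rw [heq] at h1
    have h2 : Tendsto (fun k => t^2 * (g k z)^2) (U : Filter ℕ) (nhds (t^2 * Q z)) :=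
      (hQ z).const_mul _
    exact tendsto_nhds_unique h1 h2
  have hqlb : ∀ z, α ^ 2 * ‖z‖ ^ 2 ≤ Q z := by
    intro z
    refine ge_of_tendsto (hQ z) (Filter.Eventually.of_forall fun k => ?_)
    nlinarith [mul_self_le_mul_self (mul_nonneg hα.le (norm_nonneg z)) (hlb k z)]
  have hqub : ∀ z, Q z ≤ β ^ 2 * ‖z‖ ^ 2 := by
    intro z
    refine le_of_tendsto (hQ z) (Filter.Eventually.of_forall fun k => ?_)
    nlinarith [mul_self_le_mul_self (hnn k z) (hub k z)]
  have hqx : Q x = r ^ 2 := by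
    have h1 : Tendsto (fun k => (g k x)^2) atTop (nhds (r^2)) := by
      have := hconv.mul hconv
      simpa [pow_two] using this
    exact tendsto_nhds_unique (hQ x) (h1.mono_left hUle)
  have hqlip : ∀ u v : X, |Q u - Q v| ≤ (2 * β^2) * ‖u - v‖ * (‖u‖ + ‖v‖ + 1) := by
    intro u v
    have hbd : ∀ k, |(g k u)^2 - (g k v)^2| ≤ (2 * β^2) * ‖u - v‖ * (‖u‖ + ‖v‖ + 1) := by
      intro k
      have hd : |g k u - g k v| ≤ β * ‖u - v‖ := by
        rw [abs_sub_le_iff]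
        constructor
        · have h1 : g k u ≤ g k v + g k (u - v) := by
            have := hgsub k v (u - v)
            rw [add_sub_cancel] at this
            exact this
          linarith [hub k (u - v)]
        · have h2 : g k v ≤ g k u + g k (v - u) := by
            have := hgsub k u (v - u)
            rw [add_sub_cancel] at this
            exact this
          have h3 : g k (v - u) = g k (u - v) := by
            have := hghom k (-1) (u - v)
            simp only [neg_smul, one_smul, abs_neg, abs_one, one_mul] at this
            rw [show v - u = -(u - v) by abel, this]
          rw [h3] at h2
          linarith [hub k (u - v)]
      have hs : |g k u + g k v| ≤ β * (‖u‖ + ‖v‖) := by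
        rw [abs_of_nonneg (add_nonneg (hnn k u) (hnn k v))]
        have := hub k u
        have := hub k v
        linarith
      have hfac : (g k u)^2 - (g k v)^2 = (g k u - g k v) * (g k u + g k v) := by ring
      rw [hfac, abs_mul]
      calc |g k u - g k v| * |g k u + g k v| ≤ (β * ‖u - v‖) * (β * (‖u‖ + ‖v‖)) := by
            apply mul_le_mul hd hs (abs_nonneg _) (by positivity)
        _ ≤ (2 * β^2) * ‖u - v‖ * (‖u‖ + ‖v‖ + 1) := by
            nlinarith [norm_nonneg u, norm_nonneg v, norm_nonneg (u - v), hβ.le,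
              mul_nonneg (norm_nonneg (u-v)) (norm_nonneg u),
              mul_nonneg (norm_nonneg (u-v)) (norm_nonneg v),
              mul_nonneg hβ.le hβ.le]
    have h1 : Tendsto (fun k => (g k u)^2 - (g k v)^2) (U : Filter ℕ) (nhds (Q u - Q v)) :=
      (hQ u).sub (hQ v)
    have h2 : Tendsto (fun k => |(g k u)^2 - (g k v)^2|) (U : Filter ℕ) (nhds |Q u - Q v|) :=
      h1.abs
    exact le_of_tendsto h2 (Filter.Eventually.of_forall hbd)
  obtain ⟨B, hsym, haddl, hsmull, hdiag⟩ :=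
    atdm_polar Q (2 * β^2) (by positivity) hqpar hqhom hqlip
  refine ⟨B, hsym, haddl, hsmull, fun z => ?_, by rw [hdiag, hqx]⟩
  rw [hdiag]
  exact ⟨hqlb z, hqub z⟩

end LimitForm
section Ellipsoid

variable {X : Type*} [NormedAddCommGroup X] [NormedSpace ℝ X]

lemma atdm_inv (T : X →L[ℝ] X) (hsurj : Function.Surjective T) (hiso : ∀ z, ‖T z‖ = ‖z‖) :
    ∃ S : X →L[ℝ] X, (Function.Surjective S ∧ ∀ z, ‖S z‖ = ‖z‖) ∧
      (∀ z, S (T z) = z) ∧ (∀ z, T (S z) = z) := by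
  have hinj : Function.Injective T := by
    intro u v huv
    have h := hiso (u - v)
    rw [map_sub, huv, sub_self, norm_zero] at h
    exact sub_eq_zero.mp (norm_eq_zero.mp h.symm)
  let e : X ≃ₗ[ℝ] X := LinearEquiv.ofBijective (T : X →ₗ[ℝ] X) ⟨hinj, hsurj⟩
  have he : ∀ z, e z = T z := fun z => rfl
  have hes : ∀ w, T (e.symm w) = w := fun w => by
    have := e.apply_symm_apply w
    rwa [he] at this
  have hni : ∀ w, ‖e.symm w‖ = ‖w‖ := fun w => by
    rw [← hiso (e.symm w), hes]
  let S : X →L[ℝ] X := LinearMap.mkContinuous (e.symm : X →ₗ[ℝ] X) 1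
    (fun w => by rw [one_mul]; exact (hni w).le)
  have hS : ∀ w, S w = e.symm w := fun w => rfl
  have hST : ∀ z, S (T z) = z := fun z => by
    rw [hS, ← he z, e.symm_apply_apply]
  refine ⟨S, ⟨fun z => ⟨T z, hST z⟩, fun w => by rw [hS]; exact hni w⟩, hST, fun w => by
    rw [hS]; exact hes w⟩

lemma atdm_ellipsoids
    (n : X → ℝ) (hn : IsEuclideanNorm n) (a b : ℝ) (ha : 0 < a) (hb : 0 < b)
    (hab : ∀ z : X, a * ‖z‖ ≤ n z ∧ n z ≤ b * ‖z‖)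
    (x₀ : X) (hx₀ : ‖x₀‖ = 1)
    (hAT : ∀ x y : X, ‖x‖ = 1 → ‖y‖ = 1 → ∀ ε > (0 : ℝ),
      ∃ T : X →L[ℝ] X, Function.Surjective T ∧ (∀ z : X, ‖T z‖ = ‖z‖) ∧ ‖y - T x‖ ≤ ε) :
    ∃ K : ℝ, 1 ≤ K ∧ ∀ x : X,
      (∃ B : X → X → ℝ, (∀ u v, B u v = B v u) ∧ (∀ u v w, B (u+v) w = B u w + B v w) ∧
        (∀ (t : ℝ) u v, B (t•u) v = t * B u v) ∧
        (∀ z, ‖z‖^2 ≤ B z z ∧ B z z ≤ K^2 * ‖z‖^2) ∧ B x x = ‖x‖^2) ∧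
      (∃ B : X → X → ℝ, (∀ u v, B u v = B v u) ∧ (∀ u v w, B (u+v) w = B u w + B v w) ∧
        (∀ (t : ℝ) u v, B (t•u) v = t * B u v) ∧
        (∀ z, ‖z‖^2 ≤ K^2 * B z z ∧ B z z ≤ ‖z‖^2) ∧ B x x = ‖x‖^2) := by
  classical
  obtain ⟨hn0, hneq, hnsm, hnadd, hnpar⟩ := hn
  have hn_zero : n 0 = 0 := (hneq 0).mpr rfl
  -- the isometry group as an index type
  let ι := {T : X →L[ℝ] X // Function.Surjective T ∧ ∀ z : X, ‖T z‖ = ‖z‖}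
  haveI hne : Nonempty ι := ⟨⟨ContinuousLinearMap.id ℝ X, Function.surjective_id, fun z => rfl⟩⟩
  set sfun : X → ℝ := fun x => ⨆ T : ι, n (T.1 x) with hsfun
  set ifun : X → ℝ := fun x => ⨅ T : ι, n (T.1 x) with hifun
  have hTub : ∀ (x : X) (T : ι), n (T.1 x) ≤ b * ‖x‖ := fun x T => by
    have h := (hab (T.1 x)).2
    rwa [T.2.2 x] at h
  have hTlb : ∀ (x : X) (T : ι), a * ‖x‖ ≤ n (T.1 x) := fun x T => by
    have h := (hab (T.1 x)).1
    rwa [T.2.2 x] at h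
  have bddA : ∀ x : X, BddAbove (Set.range fun T : ι => n (T.1 x)) := fun x =>
    ⟨b * ‖x‖, by rintro _ ⟨T, rfl⟩; exact hTub x T⟩
  have bddB : ∀ x : X, BddBelow (Set.range fun T : ι => n (T.1 x)) := fun x =>
    ⟨a * ‖x‖, by rintro _ ⟨T, rfl⟩; exact hTlb x T⟩
  have hle_s : ∀ (x : X) (T : ι), n (T.1 x) ≤ sfun x := fun x T => le_ciSup (bddA x) T
  have hi_le : ∀ (x : X) (T : ι), ifun x ≤ n (T.1 x) := fun x T => ciInf_le (bddB x) T
  have hs_ub : ∀ x : X, sfun x ≤ b * ‖x‖ := fun x => ciSup_le (hTub x)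
  have hi_lb : ∀ x : X, a * ‖x‖ ≤ ifun x := fun x => le_ciInf (hTlb x)
  -- composition in the group
  have hcomp : ∀ (T S : ι), Function.Surjective (T.1.comp S.1) ∧
      ∀ z : X, ‖(T.1.comp S.1) z‖ = ‖z‖ := by
    intro T S
    constructor
    · exact T.2.1.comp S.2.1
    · intro z
      rw [ContinuousLinearMap.comp_apply, T.2.2, S.2.2]
  -- invariance under the group
  have hs_inv : ∀ (T : ι) (x : X), sfun (T.1 x) = sfun x := by
    intro T x
    apply le_antisymm
    · apply ciSup_le
      intro S
      have : n (S.1 (T.1 x)) = n ((S.1.comp T.1) x) := by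
        rw [ContinuousLinearMap.comp_apply]
      rw [this]
      exact hle_s x ⟨S.1.comp T.1, hcomp S T⟩
    · apply ciSup_le
      intro S
      obtain ⟨Ti, hTimem, hTiL, _⟩ := atdm_inv T.1 T.2.1 T.2.2
      have h1 : S.1 x = (S.1.comp Ti) (T.1 x) := by
        rw [ContinuousLinearMap.comp_apply, hTiL]
      rw [h1]
      exact hle_s (T.1 x) ⟨S.1.comp Ti, hcomp S ⟨Ti, hTimem⟩⟩
  have hi_inv : ∀ (T : ι) (x : X), ifun (T.1 x) = ifun x := by
    intro T x
    apply le_antisymm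
    · apply le_ciInf
      intro S
      obtain ⟨Ti, hTimem, hTiL, _⟩ := atdm_inv T.1 T.2.1 T.2.2
      have h1 : S.1 x = (S.1.comp Ti) (T.1 x) := by
        rw [ContinuousLinearMap.comp_apply, hTiL]
      rw [h1]
      exact hi_le (T.1 x) ⟨S.1.comp Ti, hcomp S ⟨Ti, hTimem⟩⟩
    · apply le_ciInf
      intro S
      have h1 : n (S.1 (T.1 x)) = n ((S.1.comp T.1) x) := by
        rw [ContinuousLinearMap.comp_apply]
      rw [h1]
      exact hi_le x ⟨S.1.comp T.1, hcomp S T⟩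
  -- Lipschitz continuity
  have hnd : ∀ u v : X, n u ≤ n v + n (u - v) := by
    intro u v
    have := hnadd v (u - v)
    rwa [add_sub_cancel] at this
  have hs_lip : ∀ x y : X, sfun x ≤ sfun y + b * ‖x - y‖ := by
    intro x y
    apply ciSup_le
    intro T
    have h1 : n (T.1 x) ≤ n (T.1 y) + n (T.1 x - T.1 y) := hnd _ _
    have h2 : n (T.1 x - T.1 y) ≤ b * ‖x - y‖ := by
      rw [← map_sub]
      exact hTub (x - y) T
    linarith [hle_s y T]
  have hi_lip : ∀ x y : X, ifun x ≤ ifun y + b * ‖x - y‖ := by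
    intro x y
    have h : ∀ T : ι, ifun x - b * ‖x - y‖ ≤ n (T.1 y) := by
      intro T
      have h1 : n (T.1 x) ≤ n (T.1 y) + n (T.1 x - T.1 y) := hnd _ _
      have h2 : n (T.1 x - T.1 y) ≤ b * ‖x - y‖ := by
        rw [← map_sub]
        exact hTub (x - y) T
      linarith [hi_le x T]
    have := le_ciInf h
    linarith
  -- constancy on the unit sphere
  have hs_mono : ∀ x y : X, ‖x‖ = 1 → ‖y‖ = 1 → sfun y ≤ sfun x := by
    intro x y hx hy
    apply le_of_forall_pos_le_add
    intro ε hε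
    obtain ⟨T, hT1, hT2, hT3⟩ := hAT x y hx hy (ε / b) (div_pos hε hb)
    have hTι : sfun (T x) = sfun x := hs_inv ⟨T, hT1, hT2⟩ x
    have := hs_lip y (T x)
    have hb' : b * ‖y - T x‖ ≤ b * (ε / b) := mul_le_mul_of_nonneg_left hT3 hb.le
    rw [mul_div_cancel₀ _ hb.ne'] at hb'
    linarith
  have hi_mono : ∀ x y : X, ‖x‖ = 1 → ‖y‖ = 1 → ifun y ≤ ifun x := by
    intro x y hx hy
    apply le_of_forall_pos_le_add
    intro ε hε
    obtain ⟨T, hT1, hT2, hT3⟩ := hAT x y hx hy (ε / b) (div_pos hε hb)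
    have hTι : ifun (T x) = ifun x := hi_inv ⟨T, hT1, hT2⟩ x
    have := hi_lip y (T x)
    have hb' : b * ‖y - T x‖ ≤ b * (ε / b) := mul_le_mul_of_nonneg_left hT3 hb.le
    rw [mul_div_cancel₀ _ hb.ne'] at hb'
    linarith
  -- homogeneity
  have hs_smul_le : ∀ (t : ℝ) (x : X), sfun (t • x) ≤ |t| * sfun x := by
    intro t x
    apply ciSup_le
    intro T
    rw [map_smul, hnsm]
    exact mul_le_mul_of_nonneg_left (hle_s x T) (abs_nonneg t)
  have hi_smul_ge : ∀ (t : ℝ) (x : X), |t| * ifun x ≤ ifun (t • x) := by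
    intro t x
    apply le_ciInf
    intro T
    rw [map_smul, hnsm]
    exact mul_le_mul_of_nonneg_left (hi_le x T) (abs_nonneg t)
  have hs0 : sfun (0 : X) = 0 := by
    apply le_antisymm
    · have := hs_ub 0
      simpa using this
    · have h := hi_lb (0 : X)
      have h2 := hi_le (0 : X) (Classical.arbitrary ι)
      have h3 := hle_s (0 : X) (Classical.arbitrary ι)
      simp only [norm_zero, mul_zero] at h
      linarith
  have hi0 : ifun (0 : X) = 0 := by
    apply le_antisymm
    · have h2 := hi_le (0 : X) (Classical.arbitrary ι)
      have h3 := hTub (0 : X) (Classical.arbitrary ι)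
      simp only [norm_zero, mul_zero] at h3
      linarith
    · have h := hi_lb (0 : X)
      simpa using h
  have hs_smul : ∀ (t : ℝ) (x : X), sfun (t • x) = |t| * sfun x := by
    intro t x
    rcases eq_or_ne t 0 with rfl | ht
    · simp [hs0]
    · apply le_antisymm (hs_smul_le t x)
      have h := hs_smul_le t⁻¹ (t • x)
      rw [inv_smul_smul₀ ht] at h
      have habs : |t| * |t⁻¹| = 1 := by
        rw [abs_inv, mul_inv_cancel₀ (abs_ne_zero.mpr ht)]
      calc |t| * sfun x ≤ |t| * (|t⁻¹| * sfun (t • x)) :=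
            mul_le_mul_of_nonneg_left h (abs_nonneg t)
        _ = sfun (t • x) := by rw [← mul_assoc, habs, one_mul]
  have hi_smul : ∀ (t : ℝ) (x : X), ifun (t • x) = |t| * ifun x := by
    intro t x
    rcases eq_or_ne t 0 with rfl | ht
    · simp [hi0]
    · apply le_antisymm
      · have h := hi_smul_ge t⁻¹ (t • x)
        rw [inv_smul_smul₀ ht] at h
        have habs : |t| * |t⁻¹| = 1 := by
          rw [abs_inv, mul_inv_cancel₀ (abs_ne_zero.mpr ht)]
        calc ifun (t • x) = |t| * (|t⁻¹| * ifun (t • x)) := by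
              rw [← mul_assoc, habs, one_mul]
          _ ≤ |t| * ifun x := mul_le_mul_of_nonneg_left h (abs_nonneg t)
      · exact hi_smul_ge t x
  set c : ℝ := sfun x₀ with hc
  set c' : ℝ := ifun x₀ with hc'
  have hc'pos : 0 < c' := by
    have := hi_lb x₀
    rw [hx₀, mul_one] at this
    linarith
  have hcc' : c' ≤ c :=
    le_trans (hi_le x₀ (Classical.arbitrary ι)) (hle_s x₀ (Classical.arbitrary ι))
  have hcpos : 0 < c := lt_of_lt_of_le hc'pos hcc'
  have hs_eq : ∀ x : X, sfun x = c * ‖x‖ := by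
    intro x
    rcases eq_or_ne x 0 with rfl | hx
    · simp [hs0]
    · have hu : ‖(‖x‖⁻¹ • x)‖ = 1 := norm_smul_inv_norm hx
      have h1 : x = ‖x‖ • (‖x‖⁻¹ • x) := by
        rw [smul_smul, mul_inv_cancel₀ (norm_ne_zero_iff.mpr hx), one_smul]
      have h2 : sfun x = ‖x‖ * sfun (‖x‖⁻¹ • x) := by
        conv_lhs => rw [h1]
        rw [hs_smul, abs_of_nonneg (norm_nonneg x)]
      have h3 : sfun (‖x‖⁻¹ • x) = c := le_antisymm (hs_mono x₀ _ hx₀ hu) (hs_mono _ x₀ hu hx₀)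
      rw [h2, h3, mul_comm]
  have hi_eq : ∀ x : X, ifun x = c' * ‖x‖ := by
    intro x
    rcases eq_or_ne x 0 with rfl | hx
    · simp [hi0]
    · have hu : ‖(‖x‖⁻¹ • x)‖ = 1 := norm_smul_inv_norm hx
      have h1 : x = ‖x‖ • (‖x‖⁻¹ • x) := by
        rw [smul_smul, mul_inv_cancel₀ (norm_ne_zero_iff.mpr hx), one_smul]
      have h2 : ifun x = ‖x‖ * ifun (‖x‖⁻¹ • x) := by
        conv_lhs => rw [h1]
        rw [hi_smul, abs_of_nonneg (norm_nonneg x)]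
      have h3 : ifun (‖x‖⁻¹ • x) = c' := le_antisymm (hi_mono x₀ _ hx₀ hu) (hi_mono _ x₀ hu hx₀)
      rw [h2, h3, mul_comm]
  -- the eccentricity constant
  refine ⟨c / c', (one_le_div hc'pos).mpr hcc', ?_⟩
  intro x
  have hKsq : (c / c') ^ 2 = c ^ 2 / c' ^ 2 := by rw [div_pow]
  -- the family of quadratic seminorms indexed by the group
  have hgpar : ∀ (T : ι) (u v : X),
      n (T.1 (u + v)) ^ 2 + n (T.1 (u - v)) ^ 2 = 2 * n (T.1 u) ^ 2 + 2 * n (T.1 v) ^ 2 := by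
    intro T u v
    rw [map_add, map_sub]
    exact hnpar (T.1 u) (T.1 v)
  have hghom : ∀ (T : ι) (t : ℝ) (z : X), n (T.1 (t • z)) = |t| * n (T.1 z) := by
    intro T t z
    rw [map_smul, hnsm]
  have hgsub : ∀ (T : ι) (u v : X), n (T.1 (u + v)) ≤ n (T.1 u) + n (T.1 v) := by
    intro T u v
    rw [map_add]
    exact hnadd _ _
  have hglb : ∀ (T : ι) (z : X), c' * ‖z‖ ≤ n (T.1 z) := by
    intro T z
    rw [← hi_eq z]
    exact hi_le z T
  have hgub : ∀ (T : ι) (z : X), n (T.1 z) ≤ c * ‖z‖ := by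
    intro T z
    rw [← hs_eq z]
    exact hle_s z T
  constructor
  · -- inner ellipsoid, from near-infimum sequence
    have hseq : ∀ k : ℕ, ∃ T : ι, n (T.1 x) < c' * ‖x‖ + 1 / (k + 1) := by
      intro k
      have h1 : ifun x < c' * ‖x‖ + 1 / (k + 1) := by
        rw [hi_eq x]
        have : (0:ℝ) < 1 / (k + 1) := by positivity
        linarith
      exact exists_lt_of_ciInf_lt h1
    choose Ti hTi using hseq
    have hconv : Filter.Tendsto (fun k => n ((Ti k).1 x)) Filter.atTop (nhds (c' * ‖x‖)) := by
      have hub' : Filter.Tendsto (fun k : ℕ => c' * ‖x‖ + 1 / (k + 1)) Filter.atTop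
          (nhds (c' * ‖x‖)) := by
        have h0 := tendsto_one_div_add_atTop_nhds_zero_nat (𝕜 := ℝ)
        have := (tendsto_const_nhds (x := c' * ‖x‖) (f := Filter.atTop (α := ℕ))).add h0
        simpa using this
      exact tendsto_of_tendsto_of_tendsto_of_le_of_le tendsto_const_nhds hub'
        (fun k => hglb (Ti k) x) (fun k => (hTi k).le)
    obtain ⟨B, hsym, haddl, hsmull, hbnd, hBx⟩ :=
      atdm_limit_form (fun Q C hC h1 h2 h3 => atdm_polar Q C hC h1 h2 h3)
        (fun k z => n ((Ti k).1 z)) c' c hc'pos hcpos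
        (fun k => hgpar (Ti k)) (fun k => hghom (Ti k)) (fun k => hgsub (Ti k))
        (fun k => hglb (Ti k)) (fun k => hgub (Ti k)) x (c' * ‖x‖) hconv
    refine ⟨fun u v => B u v / c' ^ 2,
      fun u v => by show B u v / c' ^ 2 = B v u / c' ^ 2; rw [hsym],
      fun u v w => by
        show B (u + v) w / c' ^ 2 = B u w / c' ^ 2 + B v w / c' ^ 2
        rw [haddl]; ring,
      fun t u v => by
        show B (t • u) v / c' ^ 2 = t * (B u v / c' ^ 2)
        rw [hsmull]; ring,
      fun z => ?_, ?_⟩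
    · obtain ⟨hlb', hub'⟩ := hbnd z
      constructor
      · show ‖z‖ ^ 2 ≤ B z z / c' ^ 2
        rw [le_div_iff₀ (by positivity)]
        nlinarith
      · show B z z / c' ^ 2 ≤ (c / c') ^ 2 * ‖z‖ ^ 2
        rw [div_le_iff₀ (by positivity), hKsq]
        have he : c ^ 2 / c' ^ 2 * ‖z‖ ^ 2 * c' ^ 2 = c ^ 2 * ‖z‖ ^ 2 := by
          field_simp
        rw [he]
        exact hub'
    · show B x x / c' ^ 2 = ‖x‖ ^ 2
      rw [hBx, mul_pow]
      field_simp
  · -- outer ellipsoid, from near-supremum sequence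
    have hseq : ∀ k : ℕ, ∃ T : ι, c * ‖x‖ - 1 / (k + 1) < n (T.1 x) := by
      intro k
      have h1 : c * ‖x‖ - 1 / (k + 1) < sfun x := by
        rw [hs_eq x]
        have : (0:ℝ) < 1 / (k + 1) := by positivity
        linarith
      exact exists_lt_of_lt_ciSup h1
    choose Ti hTi using hseq
    have hconv : Filter.Tendsto (fun k => n ((Ti k).1 x)) Filter.atTop (nhds (c * ‖x‖)) := by
      have hlb' : Filter.Tendsto (fun k : ℕ => c * ‖x‖ - 1 / (k + 1)) Filter.atTop
          (nhds (c * ‖x‖)) := by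
        have h0 := tendsto_one_div_add_atTop_nhds_zero_nat (𝕜 := ℝ)
        have := (tendsto_const_nhds (x := c * ‖x‖) (f := Filter.atTop (α := ℕ))).sub h0
        simpa using this
      exact tendsto_of_tendsto_of_tendsto_of_le_of_le hlb' tendsto_const_nhds
        (fun k => (hTi k).le) (fun k => hgub (Ti k) x)
    obtain ⟨B, hsym, haddl, hsmull, hbnd, hBx⟩ :=
      atdm_limit_form (fun Q C hC h1 h2 h3 => atdm_polar Q C hC h1 h2 h3)
        (fun k z => n ((Ti k).1 z)) c' c hc'pos hcpos
        (fun k => hgpar (Ti k)) (fun k => hghom (Ti k)) (fun k => hgsub (Ti k))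
        (fun k => hglb (Ti k)) (fun k => hgub (Ti k)) x (c * ‖x‖) hconv
    refine ⟨fun u v => B u v / c ^ 2,
      fun u v => by show B u v / c ^ 2 = B v u / c ^ 2; rw [hsym],
      fun u v w => by
        show B (u + v) w / c ^ 2 = B u w / c ^ 2 + B v w / c ^ 2
        rw [haddl]; ring,
      fun t u v => by
        show B (t • u) v / c ^ 2 = t * (B u v / c ^ 2)
        rw [hsmull]; ring,
      fun z => ?_, ?_⟩
    · obtain ⟨hlb', hub'⟩ := hbnd z
      have hc2 : (0:ℝ) < c ^ 2 := by positivity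
      constructor
      · show ‖z‖ ^ 2 ≤ (c / c') ^ 2 * (B z z / c ^ 2)
        have he : (c / c') ^ 2 * (B z z / c ^ 2) = B z z / c' ^ 2 := by
          field_simp
        rw [he, le_div_iff₀ (by positivity : (0:ℝ) < c' ^ 2)]
        nlinarith
      · show B z z / c ^ 2 ≤ ‖z‖ ^ 2
        rw [div_le_iff₀ hc2]
        nlinarith
    · show B x x / c ^ 2 = ‖x‖ ^ 2
      rw [hBx, mul_pow]
      field_simp

end Ellipsoid
section Attain

variable {X : Type*} [NormedAddCommGroup X] [NormedSpace ℝ X]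

set_option maxHeartbeats 1000000 in
lemma atdm_attain [CompleteSpace X]
    (n : X → ℝ) (hn : IsEuclideanNorm n) (a b : ℝ) (ha : 0 < a) (hb : 0 < b)
    (hab : ∀ z : X, a * ‖z‖ ≤ n z ∧ n z ≤ b * ‖z‖)
    (f : X →L[ℝ] ℝ) (hf : f ≠ 0) :
    ∃ z : X, ‖z‖ = 1 ∧ f z = ‖f‖ := by
  classical
  obtain ⟨hn0, hneq, hnsm, hnadd, hnpar⟩ := hn
  have hs : 0 < ‖f‖ := norm_pos_iff.mpr hf
  set C : ℕ → Set X := fun k => {z | ‖z‖ ≤ 1 ∧ ‖f‖ - 1 / (k + 1) ≤ f z} with hC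
  have hCne : ∀ k, (C k).Nonempty := by
    intro k
    have hk : (0:ℝ) < 1 / (k + 1) := by positivity
    rcases le_or_gt ‖f‖ (1 / (k + 1)) with h | h
    · refine ⟨0, ⟨by simp, ?_⟩⟩
      rw [map_zero]
      linarith
    · have h2 : ‖f‖ - 1 / (k + 1) < ‖f‖ := by linarith
      obtain ⟨x, hx1, hx2⟩ := f.exists_lt_apply_of_lt_opNorm h2
      rcases le_or_gt 0 (f x) with hfx | hfx
      · refine ⟨x, hx1.le, ?_⟩
        rw [Real.norm_eq_abs, abs_of_nonneg hfx] at hx2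
        exact hx2.le
      · refine ⟨-x, by rw [norm_neg]; exact hx1.le, ?_⟩
        rw [Real.norm_eq_abs, abs_of_neg hfx] at hx2
        rw [map_neg]
        linarith
  have hCsub : ∀ k l, k ≤ l → C l ⊆ C k := by
    intro k l hkl z hz
    refine ⟨hz.1, le_trans ?_ hz.2⟩
    have : (1:ℝ) / (l + 1) ≤ 1 / (k + 1) := by
      apply one_div_le_one_div_of_le (by positivity)
      have : (k:ℝ) ≤ l := Nat.cast_le.mpr hkl
      linarith
    linarith
  have hCim : ∀ k, (n '' C k).Nonempty := fun k => (hCne k).image n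
  have hbdd : ∀ k, BddBelow (n '' C k) := fun k =>
    ⟨0, by rintro _ ⟨z, _, rfl⟩; exact hn0 z⟩
  set d : ℕ → ℝ := fun k => sInf (n '' C k) with hd
  have hd0 : ∀ k, 0 ≤ d k := fun k => le_csInf (hCim k) (by rintro _ ⟨z, _, rfl⟩; exact hn0 z)
  have hdub : ∀ k, d k ≤ b := by
    intro k
    obtain ⟨z, hz⟩ := hCne k
    have h1 : d k ≤ n z := csInf_le (hbdd k) ⟨z, hz, rfl⟩
    have h2 : n z ≤ b * ‖z‖ := (hab z).2
    have h3 : b * ‖z‖ ≤ b * 1 := mul_le_mul_of_nonneg_left hz.1 hb.le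
    linarith
  have hmono : Monotone d := fun k l hkl =>
    csInf_le_csInf (hbdd k) (hCim l) (Set.image_mono (f := n) (hCsub k l hkl))
  have hdbdd : BddAbove (Set.range d) := ⟨b, by rintro _ ⟨k, rfl⟩; exact hdub k⟩
  set dl : ℝ := ⨆ k, d k with hdl
  have hdle : ∀ k, d k ≤ dl := fun k => le_ciSup hdbdd k
  have hdl0 : 0 ≤ dl := le_trans (hd0 0) (hdle 0)
  have hzex : ∀ k, ∃ z ∈ C k, n z < d k + 1 / (k + 1) := by
    intro k
    have h1 : sInf (n '' C k) < d k + 1 / (k + 1) := by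
      rw [show sInf (n '' C k) = d k from rfl]
      have : (0:ℝ) < 1 / (k + 1) := by positivity
      linarith
    obtain ⟨_, ⟨z, hz, rfl⟩, hr⟩ := exists_lt_of_csInf_lt (hCim k) h1
    exact ⟨z, hz, hr⟩
  choose z hzC hzn using hzex
  have hdz : ∀ k, d k ≤ n (z k) := fun k => csInf_le (hbdd k) ⟨z k, hzC k, rfl⟩
  -- midpoint estimate
  have hmid : ∀ k l, k ≤ l → 2 * d k ≤ n (z k + z l) := by
    intro k l hkl
    have hm : (1/2 : ℝ) • (z k + z l) ∈ C k := by
      have hz1 := hzC k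
      have hz2 := hCsub k l hkl (hzC l)
      constructor
      · rw [norm_smul, Real.norm_eq_abs]
        have : ‖z k + z l‖ ≤ 2 := by
          calc ‖z k + z l‖ ≤ ‖z k‖ + ‖z l‖ := norm_add_le _ _
            _ ≤ 2 := by linarith [hz1.1, hz2.1]
        rw [abs_of_pos (by norm_num : (0:ℝ) < 1/2)]
        linarith
      · rw [map_smul, map_add, smul_eq_mul]
        have := hz1.2
        have := hz2.2
        linarith
    have h1 : d k ≤ n ((1/2 : ℝ) • (z k + z l)) := csInf_le (hbdd k) ⟨_, hm, rfl⟩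
    rw [hnsm, abs_of_pos (by norm_num : (0:ℝ) < 1/2)] at h1
    linarith
  -- Cauchy sequence
  set bb : ℕ → ℝ := fun N =>
    Real.sqrt (max 0 (4 * (dl + 1 / (N + 1)) ^ 2 - 4 * d N ^ 2)) / a with hbb
  have hdist : ∀ k l N : ℕ, N ≤ k → N ≤ l → dist (z k) (z l) ≤ bb N := by
    have key : ∀ k l N : ℕ, N ≤ k → N ≤ l → k ≤ l → dist (z k) (z l) ≤ bb N := by
      intro k l N hNk hNl hkl
      have hsq : n (z k - z l) ^ 2 ≤ 4 * (dl + 1 / (N + 1)) ^ 2 - 4 * d N ^ 2 := by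
        have hp := hnpar (z k) (z l)
        have h1 : n (z k) < d k + 1 / (k + 1) := hzn k
        have h2 : n (z l) < d l + 1 / (l + 1) := hzn l
        have h3 : 2 * d N ≤ n (z k + z l) := le_trans (by linarith [hmono hNk]) (hmid k l hkl)
        have hek : (1:ℝ) / (k + 1) ≤ 1 / (N + 1) := by
          apply one_div_le_one_div_of_le (by positivity)
          have : (N:ℝ) ≤ k := Nat.cast_le.mpr hNk
          linarith
        have hel : (1:ℝ) / (l + 1) ≤ 1 / (N + 1) := by
          apply one_div_le_one_div_of_le (by positivity)
          have : (N:ℝ) ≤ l := Nat.cast_le.mpr hNl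
          linarith
        have hk4 : n (z k) ≤ dl + 1 / (N + 1) := by linarith [hdle k]
        have hl4 : n (z l) ≤ dl + 1 / (N + 1) := by linarith [hdle l]
        have he0 : (0:ℝ) ≤ dl + 1 / (N + 1) := by positivity
        have hsq1 : n (z k) ^ 2 ≤ (dl + 1 / (N + 1)) ^ 2 := by
          nlinarith [mul_self_le_mul_self (hn0 (z k)) hk4]
        have hsq2 : n (z l) ^ 2 ≤ (dl + 1 / (N + 1)) ^ 2 := by
          nlinarith [mul_self_le_mul_self (hn0 (z l)) hl4]
        have h30 : (0:ℝ) ≤ 2 * d N := by linarith [hd0 N]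
        have hsq3 : 4 * d N ^ 2 ≤ n (z k + z l) ^ 2 := by
          nlinarith [mul_self_le_mul_self h30 h3]
        linarith [hp, hsq1, hsq2, hsq3]
      have hle0 : n (z k - z l) ^ 2 ≤ max 0 (4 * (dl + 1 / (N + 1)) ^ 2 - 4 * d N ^ 2) :=
        le_trans hsq (le_max_right _ _)
      have hnle : n (z k - z l) ≤ Real.sqrt (max 0 (4 * (dl + 1 / (N + 1)) ^ 2 - 4 * d N ^ 2)) := by
        have h := Real.sqrt_le_sqrt hle0
        rwa [Real.sqrt_sq (hn0 _)] at h
      have hnz : a * ‖z k - z l‖ ≤ n (z k - z l) := (hab _).1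
      rw [dist_eq_norm, hbb]
      rw [le_div_iff₀ ha]
      calc ‖z k - z l‖ * a = a * ‖z k - z l‖ := by ring
        _ ≤ n (z k - z l) := hnz
        _ ≤ _ := hnle
    intro k l N hNk hNl
    rcases le_total k l with h | h
    · exact key k l N hNk hNl h
    · rw [dist_comm]
      exact key l k N hNl hNk h
  have hb0 : Filter.Tendsto bb Filter.atTop (nhds 0) := by
    have h0 : Filter.Tendsto (fun N : ℕ => 1 / ((N:ℝ) + 1)) Filter.atTop (nhds 0) :=
      tendsto_one_div_add_atTop_nhds_zero_nat
    have hdten : Filter.Tendsto d Filter.atTop (nhds dl) := tendsto_atTop_ciSup hmono hdbdd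
    have hg : Filter.Tendsto (fun N : ℕ => 4 * (dl + 1 / (N + 1)) ^ 2 - 4 * d N ^ 2)
        Filter.atTop (nhds (4 * dl ^ 2 - 4 * dl ^ 2)) := by
      apply Filter.Tendsto.sub
      · have h1 : Filter.Tendsto (fun N : ℕ => dl + 1 / ((N:ℝ) + 1)) Filter.atTop (nhds dl) := by
          have := (tendsto_const_nhds (x := dl) (f := Filter.atTop (α := ℕ))).add h0
          simpa using this
        have := (h1.mul h1).const_mul (4:ℝ)
        simpa [pow_two] using this
      · have := (hdten.mul hdten).const_mul (4:ℝ)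
        simpa [pow_two] using this
    have hg0 : Filter.Tendsto (fun N : ℕ => 4 * (dl + 1 / (N + 1)) ^ 2 - 4 * d N ^ 2)
        Filter.atTop (nhds 0) := by simpa using hg
    have hmax : Filter.Tendsto (fun N : ℕ => max 0 (4 * (dl + 1 / (N + 1)) ^ 2 - 4 * d N ^ 2))
        Filter.atTop (nhds 0) := by
      have := (tendsto_const_nhds (x := (0:ℝ)) (f := Filter.atTop (α := ℕ))).max hg0
      simpa using this
    have hsqrt : Filter.Tendsto
        (fun N : ℕ => Real.sqrt (max 0 (4 * (dl + 1 / (N + 1)) ^ 2 - 4 * d N ^ 2)))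
        Filter.atTop (nhds 0) := by
      have := (Real.continuous_sqrt.tendsto 0).comp hmax
      simpa [Function.comp_def] using this
    have h := hsqrt.div_const a
    rw [zero_div] at h
    rw [hbb]
    exact h
  have hcauchy : CauchySeq z := cauchySeq_of_le_tendsto_0 bb (fun k l N h1 h2 => hdist k l N h1 h2) hb0
  obtain ⟨w, hw⟩ := cauchySeq_tendsto_of_complete hcauchy
  have hwn : ‖w‖ ≤ 1 := by
    have h1 : Filter.Tendsto (fun k => ‖z k‖) Filter.atTop (nhds ‖w‖) := hw.norm
    exact le_of_tendsto h1 (Filter.Eventually.of_forall fun k => (hzC k).1)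
  have hfw : ∀ k : ℕ, ‖f‖ - 1 / (k + 1) ≤ f w := by
    intro k
    have h1 : Filter.Tendsto (fun l => f (z l)) Filter.atTop (nhds (f w)) :=
      (f.continuous.tendsto w).comp hw
    refine ge_of_tendsto h1 ?_
    filter_upwards [Filter.eventually_ge_atTop k] with l hl
    exact (hCsub k l hl (hzC l)).2
  have hfw2 : ‖f‖ ≤ f w := by
    apply le_of_forall_pos_le_add
    intro ε hε
    obtain ⟨k, hk⟩ := exists_nat_one_div_lt hε
    have := hfw k
    linarith
  have hfw3 : f w ≤ ‖f‖ := by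
    calc f w ≤ |f w| := le_abs_self _
      _ = ‖f w‖ := (Real.norm_eq_abs _).symm
      _ ≤ ‖f‖ * ‖w‖ := f.le_opNorm w
      _ ≤ ‖f‖ * 1 := mul_le_mul_of_nonneg_left hwn hs.le
      _ = ‖f‖ := mul_one _
  have hfeq : f w = ‖f‖ := le_antisymm hfw3 hfw2
  have hwn1 : ‖w‖ = 1 := by
    apply le_antisymm hwn
    by_contra h
    push_neg at h
    have h2 : ‖f‖ * ‖w‖ < ‖f‖ * 1 := by
      apply mul_lt_mul_of_pos_left h hs
    have h3 : f w ≤ ‖f‖ * ‖w‖ := by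
      calc f w ≤ |f w| := le_abs_self _
        _ = ‖f w‖ := (Real.norm_eq_abs _).symm
        _ ≤ ‖f‖ * ‖w‖ := f.le_opNorm w
    rw [mul_one] at h2
    linarith [hfeq ▸ h3]
  exact ⟨w, hwn1, hfeq⟩

end Attain
section Helpers

variable {X : Type*} [NormedAddCommGroup X] [NormedSpace ℝ X]

lemma atdm_sub (B : X → X → ℝ)
    (hsym : ∀ u v, B u v = B v u)
    (haddl : ∀ u v w, B (u + v) w = B u w + B v w)
    (hsmull : ∀ (t : ℝ) u v, B (t • u) v = t * B u v) (u v : X) :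
    B (u - v) (u - v) = B u u - 2 * B u v + B v v := by
  have haddr : ∀ u v w, B u (v + w) = B u v + B u w := fun u v w => by
    rw [hsym, haddl, hsym v u, hsym w u]
  have hsmulr : ∀ (t : ℝ) u v, B u (t • v) = t * B u v := fun t u v => by
    rw [hsym, hsmull, hsym]
  have e : u - v = u + (-1 : ℝ) • v := by
    rw [neg_smul, one_smul, sub_eq_add_neg]
  rw [e]
  simp only [haddl, haddr, hsmull, hsmulr]
  rw [hsym v u]; ring

lemma atdm_expand2 (B : X → X → ℝ)
    (hsym : ∀ u v, B u v = B v u)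
    (haddl : ∀ u v w, B (u + v) w = B u w + B v w)
    (hsmull : ∀ (t : ℝ) u v, B (t • u) v = t * B u v) (t : ℝ) (u v : X) :
    B (u + t • v) (u + t • v) = B u u + 2 * t * B u v + t ^ 2 * B v v := by
  have haddr : ∀ u v w, B u (v + w) = B u v + B u w := fun u v w => by
    rw [hsym, haddl, hsym v u, hsym w u]
  have hsmulr : ∀ (t : ℝ) u v, B u (t • v) = t * B u v := fun t u v => by
    rw [hsym, hsmull, hsym]
  simp only [haddl, haddr, hsmull, hsmulr]
  rw [hsym v u]; ring

end Helpers

set_option maxHeartbeats 1000000 in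
theorem AT_renorming_duality_map_lipschitz_equivalence'
    {X : Type*} [NormedAddCommGroup X] [NormedSpace ℝ X] [CompleteSpace X]
    (hren : IsHilbertRenorming X)
    (hAT : ∀ x y : X, ‖x‖ = 1 → ‖y‖ = 1 → ∀ ε > (0 : ℝ),
      ∃ T : X →L[ℝ] X, Function.Surjective T ∧ (∀ z : X, ‖T z‖ = ‖z‖) ∧ ‖y - T x‖ ≤ ε) :
    (∀ x : X, ∃! f : X →L[ℝ] ℝ, f x = ‖x‖ ^ 2 ∧ ‖f‖ = ‖x‖) ∧
    (∀ J : X → (X →L[ℝ] ℝ), (∀ x : X, J x x = ‖x‖ ^ 2 ∧ ‖J x‖ = ‖x‖) →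
      Function.Bijective J ∧
      (∃ L > (0 : ℝ), ∀ x y : X, ‖J x - J y‖ ≤ L * ‖x - y‖) ∧
      (∃ L > (0 : ℝ), ∀ x y : X, ‖x - y‖ ≤ L * ‖J x - J y‖)) := by
  classical
  obtain ⟨n, hn, a, ha, b, hb, hab⟩ := hren
  by_cases hX : ∀ x : X, x = 0
  · -- trivial space
    constructor
    · intro x
      rcases hX x with rfl
      refine ⟨0, ⟨by simp, by simp⟩, ?_⟩
      rintro g ⟨hg1, hg2⟩
      have : ‖g‖ = 0 := by rw [hg2, norm_zero]
      exact norm_eq_zero.mp this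
    · intro J hJ
      have hJ0 : ∀ x, J x = 0 := fun x => by
        have h : ‖J x‖ = 0 := by rw [(hJ x).2, hX x, norm_zero]
        exact norm_eq_zero.mp h
      refine ⟨⟨fun u v _ => by rw [hX u, hX v], fun f => ⟨0, ?_⟩⟩,
        ⟨1, one_pos, fun x y => ?_⟩, ⟨1, one_pos, fun x y => ?_⟩⟩
      · ext z
        rw [hX z, map_zero, map_zero]
      · rw [hJ0 x, hJ0 y, sub_self, norm_zero]
        positivity
      · rw [hX x, hX y, sub_self, norm_zero]
        positivity
  · push_neg at hX
    obtain ⟨x₁, hx₁⟩ := hX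
    have hx₀ : ‖(‖x₁‖⁻¹ • x₁)‖ = 1 := norm_smul_inv_norm hx₁
    obtain ⟨K, hK1, hell⟩ := atdm_ellipsoids n hn a b ha hb hab _ hx₀ hAT
    have hK0 : (0:ℝ) < K := lt_of_lt_of_le one_pos hK1
    choose Bi hBi using fun x : X => (hell x).1
    choose Bo hBo using fun x : X => (hell x).2
    -- canonical support functional from the outer form
    have hfcan : ∀ x : X, ∃ f : X →L[ℝ] ℝ,
        (∀ v, f v = Bo x x v) ∧ f x = ‖x‖ ^ 2 ∧ ‖f‖ = ‖x‖ := by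
      intro x
      obtain ⟨hsym, haddl, hsmull, hbnd, hdiag⟩ := hBo x
      have hpos : ∀ z, 0 ≤ Bo x z z := by
        intro z
        have h1 := (hbnd z).1
        nlinarith [sq_nonneg ‖z‖, mul_pos hK0 hK0]
      have hcs := atdm_cs (Bo x) hsym haddl hsmull hpos
      have hbound : ∀ v, ‖Bo x x v‖ ≤ ‖x‖ * ‖v‖ := by
        intro v
        rw [Real.norm_eq_abs]
        have h1 : (Bo x x v) ^ 2 ≤ Bo x x x * Bo x v v := hcs x v
        have h3 : Bo x v v ≤ ‖v‖ ^ 2 := (hbnd v).2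
        have h4 : (Bo x x v) ^ 2 ≤ (‖x‖ * ‖v‖) ^ 2 := by
          calc (Bo x x v) ^ 2 ≤ Bo x x x * Bo x v v := h1
            _ ≤ ‖x‖ ^ 2 * ‖v‖ ^ 2 := by
                rw [hdiag]
                exact mul_le_mul_of_nonneg_left h3 (sq_nonneg _)
            _ = (‖x‖ * ‖v‖) ^ 2 := by ring
        calc |Bo x x v| = Real.sqrt ((Bo x x v) ^ 2) := (Real.sqrt_sq_eq_abs _).symm
          _ ≤ Real.sqrt ((‖x‖ * ‖v‖) ^ 2) := Real.sqrt_le_sqrt h4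
          _ = ‖x‖ * ‖v‖ := Real.sqrt_sq (by positivity)
      have haddr : ∀ u v, Bo x x (u + v) = Bo x x u + Bo x x v := fun u v => by
        rw [hsym, haddl, hsym u x, hsym v x]
      have hsmulr : ∀ (t : ℝ) v, Bo x x (t • v) = t * Bo x x v := fun t v => by
        rw [hsym, hsmull, hsym]
      let fl : X →ₗ[ℝ] ℝ :=
        { toFun := fun v => Bo x x v
          map_add' := haddr
          map_smul' := fun t v => by simp only [hsmulr, RingHom.id_apply, smul_eq_mul] }
      let f : X →L[ℝ] ℝ := LinearMap.mkContinuous fl ‖x‖ hbound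
      have hfv : ∀ v, f v = Bo x x v := fun v => rfl
      have hfx : f x = ‖x‖ ^ 2 := by rw [hfv, hdiag]
      have hfnle : ‖f‖ ≤ ‖x‖ := LinearMap.mkContinuous_norm_le fl (norm_nonneg x) hbound
      have hfn : ‖f‖ = ‖x‖ := by
        apply le_antisymm hfnle
        rcases eq_or_ne x 0 with rfl | hx
        · rw [norm_zero]
          exact norm_nonneg f
        · have hxpos : 0 < ‖x‖ := norm_pos_iff.mpr hx
          have h1 : ‖x‖ ^ 2 = ‖f x‖ := by
            rw [hfx, Real.norm_eq_abs, abs_of_nonneg (sq_nonneg _)]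
          have h2 : ‖f x‖ ≤ ‖f‖ * ‖x‖ := f.le_opNorm x
          rw [← h1] at h2
          have h2' : ‖x‖ * ‖x‖ ≤ ‖f‖ * ‖x‖ := by nlinarith [h2]
          exact le_of_mul_le_mul_right h2' hxpos
      exact ⟨f, hfv, hfx, hfn⟩
    choose fcan hfcan1 hfcan2 hfcan3 using hfcan
    -- uniqueness: smoothness from the inner form
    have hkey : ∀ x : X, x ≠ 0 → ∀ g : X →L[ℝ] ℝ, g x = ‖x‖ ^ 2 → ‖g‖ = ‖x‖ →
        ∀ v, g v = Bi x x v := by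
      intro x hx g hg1 hg2
      obtain ⟨hsym, haddl, hsmull, hbnd, hdiag⟩ := hBi x
      have hxpos : 0 < ‖x‖ := norm_pos_iff.mpr hx
      have hone : ∀ v : X, g v - Bi x x v ≤ 0 := by
        intro v
        by_contra hcon
        push_neg at hcon
        obtain ⟨t, ht0, htA, htB⟩ : ∃ t : ℝ, 0 < t ∧ t * (|g v| + 1) ≤ ‖x‖ ^ 2 / 2 ∧
            t * (K ^ 2 * ‖x‖ ^ 2 * ‖v‖ ^ 2 + (g v) ^ 2 + 1) ≤ (g v - Bi x x v) * ‖x‖ ^ 2 := by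
          have hR : (0:ℝ) < K ^ 2 * ‖x‖ ^ 2 * ‖v‖ ^ 2 + (g v) ^ 2 + 1 := by positivity
          have hA : (0:ℝ) < ‖x‖ ^ 2 / (2 * (|g v| + 1)) := by positivity
          have hB : (0:ℝ) < (g v - Bi x x v) * ‖x‖ ^ 2 /
              (K ^ 2 * ‖x‖ ^ 2 * ‖v‖ ^ 2 + (g v) ^ 2 + 1) :=
            div_pos (mul_pos hcon (by positivity)) hR
          refine ⟨min (‖x‖ ^ 2 / (2 * (|g v| + 1)))
            ((g v - Bi x x v) * ‖x‖ ^ 2 / (K ^ 2 * ‖x‖ ^ 2 * ‖v‖ ^ 2 + (g v) ^ 2 + 1)),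
            lt_min hA hB, ?_, ?_⟩
          · have h1 := min_le_left (‖x‖ ^ 2 / (2 * (|g v| + 1)))
              ((g v - Bi x x v) * ‖x‖ ^ 2 / (K ^ 2 * ‖x‖ ^ 2 * ‖v‖ ^ 2 + (g v) ^ 2 + 1))
            have h2 : (0:ℝ) < |g v| + 1 := by positivity
            calc _ ≤ (‖x‖ ^ 2 / (2 * (|g v| + 1))) * (|g v| + 1) :=
                  mul_le_mul_of_nonneg_right h1 h2.le
              _ = ‖x‖ ^ 2 / 2 := by field_simp
          · have h1 := min_le_right (‖x‖ ^ 2 / (2 * (|g v| + 1)))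
              ((g v - Bi x x v) * ‖x‖ ^ 2 / (K ^ 2 * ‖x‖ ^ 2 * ‖v‖ ^ 2 + (g v) ^ 2 + 1))
            calc _ ≤ ((g v - Bi x x v) * ‖x‖ ^ 2 /
                  (K ^ 2 * ‖x‖ ^ 2 * ‖v‖ ^ 2 + (g v) ^ 2 + 1)) *
                  (K ^ 2 * ‖x‖ ^ 2 * ‖v‖ ^ 2 + (g v) ^ 2 + 1) :=
                  mul_le_mul_of_nonneg_right h1 hR.le
              _ = (g v - Bi x x v) * ‖x‖ ^ 2 := by field_simp
        have hu : 0 ≤ ‖x‖ ^ 2 + t * g v := by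
          have h1 : t * g v ≥ -(t * |g v|) := by
            have h2 := neg_abs_le (g v)
            nlinarith [ht0]
          nlinarith [htA, abs_nonneg (g v), ht0.le]
        have hfg : g (x + t • v) = ‖x‖ ^ 2 + t * g v := by
          rw [map_add, map_smul, hg1, smul_eq_mul]
        have h2 : g (x + t • v) ≤ ‖x‖ * ‖x + t • v‖ := by
          calc g (x + t • v) ≤ |g (x + t • v)| := le_abs_self _
            _ = ‖g (x + t • v)‖ := (Real.norm_eq_abs _).symm
            _ ≤ ‖g‖ * ‖x + t • v‖ := g.le_opNorm _
            _ = ‖x‖ * ‖x + t • v‖ := by rw [hg2]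
        have h5 : (‖x‖ ^ 2 + t * g v) ^ 2 ≤ (‖x‖ * ‖x + t • v‖) ^ 2 := by
          rw [← hfg]
          apply sq_le_sq' _ h2
          have := mul_nonneg (norm_nonneg x) (norm_nonneg (x + t • v))
          rw [hfg]
          linarith
        have h3 : ‖x + t • v‖ ^ 2 ≤ Bi x (x + t • v) (x + t • v) := (hbnd _).1
        have h4 := atdm_expand2 (Bi x) hsym haddl hsmull t x v
        have hchain : (‖x‖ ^ 2 + t * g v) ^ 2
            ≤ ‖x‖ ^ 2 * (‖x‖ ^ 2 + 2 * t * Bi x x v + t ^ 2 * Bi x v v) := by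
          calc (‖x‖ ^ 2 + t * g v) ^ 2 ≤ (‖x‖ * ‖x + t • v‖) ^ 2 := h5
            _ = ‖x‖ ^ 2 * ‖x + t • v‖ ^ 2 := by ring
            _ ≤ ‖x‖ ^ 2 * Bi x (x + t • v) (x + t • v) :=
                mul_le_mul_of_nonneg_left h3 (sq_nonneg _)
            _ = _ := by rw [h4, hdiag]
        have hstep : 2 * t * ‖x‖ ^ 2 * (g v - Bi x x v)
            ≤ t ^ 2 * (‖x‖ ^ 2 * Bi x v v - (g v) ^ 2) := by nlinarith [hchain]
        have hc0 : t ^ 2 * (‖x‖ ^ 2 * Bi x v v - (g v) ^ 2)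
            ≤ t * ((g v - Bi x x v) * ‖x‖ ^ 2) := by
          have hR' : ‖x‖ ^ 2 * Bi x v v - (g v) ^ 2
              ≤ K ^ 2 * ‖x‖ ^ 2 * ‖v‖ ^ 2 + (g v) ^ 2 + 1 := by
            have h1 : Bi x v v ≤ K ^ 2 * ‖v‖ ^ 2 := (hbnd v).2
            nlinarith [sq_nonneg (g v), mul_le_mul_of_nonneg_left h1 (sq_nonneg ‖x‖)]
          calc t ^ 2 * (‖x‖ ^ 2 * Bi x v v - (g v) ^ 2)
              ≤ t ^ 2 * (K ^ 2 * ‖x‖ ^ 2 * ‖v‖ ^ 2 + (g v) ^ 2 + 1) :=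
                mul_le_mul_of_nonneg_left hR' (sq_nonneg t)
            _ = t * (t * (K ^ 2 * ‖x‖ ^ 2 * ‖v‖ ^ 2 + (g v) ^ 2 + 1)) := by ring
            _ ≤ t * ((g v - Bi x x v) * ‖x‖ ^ 2) := mul_le_mul_of_nonneg_left htB ht0.le
        have hposA : 0 < t * ((g v - Bi x x v) * ‖x‖ ^ 2) :=
          mul_pos ht0 (mul_pos hcon (by positivity))
        nlinarith [hstep, hc0, hposA]
      intro v
      have h1 := hone v
      have h2 := hone (-v)
      rw [map_neg] at h2
      have h3 : Bi x x (-v) = -(Bi x x v) := by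
        have e : (-v : X) = (-1 : ℝ) • v := by rw [neg_smul, one_smul]
        rw [e, hsym, hsmull, hsym]
        ring
      rw [h3] at h2
      linarith
    -- Part 1
    have hpart1 : ∀ x : X, ∃! f : X →L[ℝ] ℝ, f x = ‖x‖ ^ 2 ∧ ‖f‖ = ‖x‖ := by
      intro x
      refine ⟨fcan x, ⟨hfcan2 x, hfcan3 x⟩, ?_⟩
      rintro g ⟨hg1, hg2⟩
      rcases eq_or_ne x 0 with rfl | hx
      · have hgz : g = 0 := norm_eq_zero.mp (by rw [hg2, norm_zero])
        have hfz : fcan 0 = 0 := norm_eq_zero.mp (by rw [hfcan3, norm_zero])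
        rw [hgz, hfz]
      · ext v
        rw [hkey x hx g hg1 hg2 v, ← hkey x hx (fcan x) (hfcan2 x) (hfcan3 x) v]
    refine ⟨hpart1, ?_⟩
    intro J hJ
    have hJBo : ∀ (x : X) (v : X), J x v = Bo x x v := by
      intro x v
      have h := (hpart1 x).unique ⟨(hJ x).1, (hJ x).2⟩ ⟨hfcan2 x, hfcan3 x⟩
      rw [h, hfcan1]
    have hJBi : ∀ x : X, x ≠ 0 → ∀ v, J x v = Bi x x v := fun x hx =>
      hkey x hx (J x) (hJ x).1 (hJ x).2
    have hJzero : J 0 = 0 := norm_eq_zero.mp (by rw [(hJ 0).2, norm_zero])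
    -- upper smoothness bound (from inner forms)
    have hupp : ∀ x y : X, 2 * (J x) (x - y) ≤ K ^ 2 * ‖x - y‖ ^ 2 + ‖x‖ ^ 2 - ‖y‖ ^ 2 := by
      intro x y
      rcases eq_or_ne x 0 with rfl | hx
      · rw [hJzero]
        simp only [ContinuousLinearMap.zero_apply, mul_zero, zero_sub, norm_neg, norm_zero]
        nlinarith [norm_nonneg y, hK1, sq_nonneg (K * ‖y‖ - ‖y‖), sq_nonneg ‖y‖]
      · obtain ⟨hsym, haddl, hsmull, hbnd, hdiag⟩ := hBi x
        have hBsub := atdm_sub (Bi x) hsym haddl hsmull x y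
        have h1 : Bi x (x - y) (x - y) ≤ K ^ 2 * ‖x - y‖ ^ 2 := (hbnd (x - y)).2
        have h2 : ‖y‖ ^ 2 ≤ Bi x y y := (hbnd y).1
        have h3 : (J x) (x - y) = ‖x‖ ^ 2 - Bi x x y := by
          rw [map_sub, (hJ x).1, hJBi x hx y]
        rw [h3]
        rw [hdiag] at hBsub
        linarith
    -- lower convexity bound (from outer forms)
    have hlow : ∀ x y : X, ‖x - y‖ ^ 2 + K ^ 2 * (‖x‖ ^ 2 - ‖y‖ ^ 2)
        ≤ K ^ 2 * (2 * (J x) (x - y)) := by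
      intro x y
      rcases eq_or_ne x 0 with rfl | hx
      · rw [hJzero]
        simp only [ContinuousLinearMap.zero_apply, mul_zero, zero_sub, norm_neg, norm_zero]
        nlinarith [norm_nonneg y, hK1, sq_nonneg (K * ‖y‖ - ‖y‖), sq_nonneg ‖y‖]
      · obtain ⟨hsym, haddl, hsmull, hbnd, hdiag⟩ := hBo x
        have hBsub := atdm_sub (Bo x) hsym haddl hsmull x y
        have hm1 : ‖x - y‖ ^ 2 ≤ K ^ 2 * Bo x (x - y) (x - y) := (hbnd (x - y)).1
        have hm2 : K ^ 2 * Bo x y y ≤ K ^ 2 * ‖y‖ ^ 2 :=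
          mul_le_mul_of_nonneg_left (hbnd y).2 (by positivity)
        have h3 : (J x) (x - y) = ‖x‖ ^ 2 - Bo x x y := by
          rw [map_sub, (hJ x).1, hJBo x y]
        have hBsubK : K ^ 2 * Bo x (x - y) (x - y)
            = K ^ 2 * ‖x‖ ^ 2 - 2 * (K ^ 2 * Bo x x y) + K ^ 2 * Bo x y y := by
          rw [hBsub, hdiag]; ring
        rw [h3]
        nlinarith [hm1, hm2, hBsubK]
    -- strong monotonicity
    have hco : ∀ x y : X, ‖x - y‖ ^ 2 ≤ K ^ 2 * ((J x - J y) (x - y)) := by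
      intro x y
      have h1 := hlow x y
      have h2 := hlow y x
      have h3 : (J y) (y - x) = -((J y) (x - y)) := by
        rw [show y - x = -(x - y) by abel, map_neg]
      have h4 : ‖y - x‖ = ‖x - y‖ := norm_sub_rev _ _
      rw [h4, h3] at h2
      have h5 : (J x - J y) (x - y) = (J x) (x - y) - (J y) (x - y) := by
        simp [ContinuousLinearMap.sub_apply]
      rw [h5]
      nlinarith [h1, h2]
    -- co-Lipschitz
    have hcoL : ∀ x y : X, ‖x - y‖ ≤ K ^ 2 * ‖J x - J y‖ := by
      intro x y
      rcases eq_or_ne x y with rfl | hxy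
      · rw [sub_self, norm_zero]
        positivity
      · have h0 : 0 < ‖x - y‖ := by
          rw [norm_pos_iff, sub_ne_zero]; exact hxy
        have h1 := hco x y
        have h2 : (J x - J y) (x - y) ≤ ‖J x - J y‖ * ‖x - y‖ := by
          calc (J x - J y) (x - y) ≤ |(J x - J y) (x - y)| := le_abs_self _
            _ = ‖(J x - J y) (x - y)‖ := (Real.norm_eq_abs _).symm
            _ ≤ ‖J x - J y‖ * ‖x - y‖ := (J x - J y).le_opNorm _
        have h3 : ‖x - y‖ ^ 2 ≤ K ^ 2 * (‖J x - J y‖ * ‖x - y‖) :=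
          le_trans h1 (mul_le_mul_of_nonneg_left h2 (by positivity))
        nlinarith [h3, h0]
    -- descent inequalities
    have hD2 : ∀ p q : X, 0 ≤ ‖q‖ ^ 2 - ‖p‖ ^ 2 - 2 * (J p) (q - p) := by
      intro p q
      have h1 : (J p) q ≤ ‖p‖ * ‖q‖ := by
        calc (J p) q ≤ |(J p) q| := le_abs_self _
          _ = ‖(J p) q‖ := (Real.norm_eq_abs _).symm
          _ ≤ ‖J p‖ * ‖q‖ := (J p).le_opNorm q
          _ = ‖p‖ * ‖q‖ := by rw [(hJ p).2]
      have h2 : (J p) (q - p) = (J p) q - ‖p‖ ^ 2 := by rw [map_sub, (hJ p).1]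
      nlinarith [sq_nonneg (‖p‖ - ‖q‖), h1, h2]
    have hupp2 : ∀ p q : X, ‖q‖ ^ 2 - ‖p‖ ^ 2 - 2 * (J p) (q - p) ≤ K ^ 2 * ‖p - q‖ ^ 2 := by
      intro p q
      have h1 := hupp p q
      have h2 : (J p) (q - p) = -((J p) (p - q)) := by
        rw [show q - p = -(p - q) by abel, map_neg]
      rw [h2]
      linarith [h1]
    -- co-coercivity
    have hcoco : ∀ x y : X, ‖J y - J x‖ ^ 2
        ≤ K ^ 2 * (‖y‖ ^ 2 - ‖x‖ ^ 2 - 2 * (J x) (y - x)) := by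
      intro x y
      have hmain : ∀ t : ℝ, 0 < t → ∀ r : ℝ, 0 ≤ r → r < ‖J y - J x‖ →
          2 * t * r ≤ (‖y‖ ^ 2 - ‖x‖ ^ 2 - 2 * (J x) (y - x)) + K ^ 2 * t ^ 2 := by
        intro t ht r hr0 hrN
        obtain ⟨v, hv1, hv2⟩ := (J y - J x).exists_lt_apply_of_lt_opNorm hrN
        have hv3 : ∃ v' : X, ‖v'‖ ≤ 1 ∧ r < (J y - J x) v' := by
          rcases le_or_gt 0 ((J y - J x) v) with h | h
          · exact ⟨v, hv1.le, by rwa [Real.norm_eq_abs, abs_of_nonneg h] at hv2⟩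
          · refine ⟨-v, by rw [norm_neg]; exact hv1.le, ?_⟩
            rw [map_neg]
            rw [Real.norm_eq_abs, abs_of_neg h] at hv2
            linarith
        obtain ⟨v', hv'1, hv'2⟩ := hv3
        have h0 := hD2 x (y - t • v')
        have h1 := hupp2 y (y - t • v')
        have e1 : (J x) ((y - t • v') - x) = (J x) (y - x) + (J x) ((y - t • v') - y) := by
          rw [← map_add]
          congr 1
          abel
        have e2 : (y - t • v') - y = -(t • v') := by abel
        have e3 : (J x) ((y - t • v') - y) = -(t * (J x) v') := by
          rw [e2, map_neg, map_smul, smul_eq_mul]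
        have e4 : (J y) ((y - t • v') - y) = -(t * (J y) v') := by
          rw [e2, map_neg, map_smul, smul_eq_mul]
        have e5 : ‖y - (y - t • v')‖ ^ 2 ≤ t ^ 2 := by
          have e : y - (y - t • v') = t • v' := by abel
          rw [e, norm_smul, Real.norm_eq_abs, abs_of_pos ht]
          nlinarith [mul_self_le_mul_self (norm_nonneg v') hv'1, sq_nonneg t]
        have h1'' : K ^ 2 * ‖y - (y - t • v')‖ ^ 2 ≤ K ^ 2 * t ^ 2 :=
          mul_le_mul_of_nonneg_left e5 (by positivity)
        have e6 : (J y) v' - (J x) v' = (J y - J x) v' := by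
          simp [ContinuousLinearMap.sub_apply]
        have hlt : 2 * t * r ≤ 2 * t * ((J y - J x) v') := by
          have h2t : (0:ℝ) ≤ 2 * t := by linarith
          exact mul_le_mul_of_nonneg_left hv'2.le h2t
        rw [e1, e3] at h0
        rw [e4] at h1
        rw [← e6] at hlt
        linarith [h0, h1, h1'', hlt]
      rcases eq_or_lt_of_le (norm_nonneg (J y - J x)) with hN0 | hNpos
      · rw [← hN0]
        have := hD2 x y
        nlinarith [sq_nonneg K]
      · have hstep : ∀ t : ℝ, 0 < t → 2 * t * ‖J y - J x‖
            ≤ (‖y‖ ^ 2 - ‖x‖ ^ 2 - 2 * (J x) (y - x)) + K ^ 2 * t ^ 2 := by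
          intro t ht
          apply le_of_forall_pos_le_add
          intro ε hε
          rcases lt_or_ge (‖J y - J x‖ - ε / (2 * t)) 0 with h | h
          · have hD := hD2 x y
            have h2t : (0:ℝ) < 2 * t := by linarith
            have hsm : 2 * t * ‖J y - J x‖ < ε := by
              have hlt : ‖J y - J x‖ < ε / (2 * t) := by linarith
              calc 2 * t * ‖J y - J x‖ < 2 * t * (ε / (2 * t)) :=
                    mul_lt_mul_of_pos_left hlt h2t
                _ = ε := by field_simp
            nlinarith [mul_nonneg (sq_nonneg K) (sq_nonneg t)]
          · have hrlt : ‖J y - J x‖ - ε / (2 * t) < ‖J y - J x‖ := by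
              have : (0:ℝ) < ε / (2 * t) := by positivity
              linarith
            have hm := hmain t ht _ h hrlt
            have he : 2 * t * (‖J y - J x‖ - ε / (2 * t)) = 2 * t * ‖J y - J x‖ - ε := by
              field_simp
            rw [he] at hm
            linarith
        have hK2 : (0:ℝ) < K ^ 2 := by positivity
        have ht := hstep (‖J y - J x‖ / K ^ 2) (div_pos hNpos hK2)
        have he2 : K ^ 2 * (‖J y - J x‖ / K ^ 2) ^ 2 = ‖J y - J x‖ ^ 2 / K ^ 2 := by
          field_simp
        have he3 : 2 * (‖J y - J x‖ / K ^ 2) * ‖J y - J x‖ = 2 * (‖J y - J x‖ ^ 2 / K ^ 2) := by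
          field_simp
        rw [he3, he2] at ht
        have h4 : ‖J y - J x‖ ^ 2 / K ^ 2 ≤ ‖y‖ ^ 2 - ‖x‖ ^ 2 - 2 * (J x) (y - x) := by
          linarith
        rw [div_le_iff₀ hK2] at h4
        nlinarith [h4]
    -- Lipschitz
    have hlip : ∀ x y : X, ‖J x - J y‖ ≤ K ^ 2 * ‖x - y‖ := by
      intro x y
      have h1 := hcoco x y
      have h2 := hcoco y x
      have hrev : ‖J y - J x‖ = ‖J x - J y‖ := norm_sub_rev _ _
      rw [hrev] at h1
      have h3 : (J x) (y - x) = -((J x) (x - y)) := by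
        rw [show y - x = -(x - y) by abel, map_neg]
      have h3' : (J y) (x - y) = -((J y) (y - x)) := by
        rw [show x - y = -(y - x) by abel, map_neg]
      have h4 : (J x) (x - y) - (J y) (x - y) ≤ ‖J x - J y‖ * ‖x - y‖ := by
        have e : (J x) (x - y) - (J y) (x - y) = (J x - J y) (x - y) := by
          simp [ContinuousLinearMap.sub_apply]
        rw [e]
        calc (J x - J y) (x - y) ≤ |(J x - J y) (x - y)| := le_abs_self _
          _ = ‖(J x - J y) (x - y)‖ := (Real.norm_eq_abs _).symm
          _ ≤ ‖J x - J y‖ * ‖x - y‖ := (J x - J y).le_opNorm _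
      have h5 : ‖x - y‖ = ‖y - x‖ := (norm_sub_rev _ _)
      rcases eq_or_lt_of_le (norm_nonneg (J x - J y)) with hN0 | hNpos
      · rw [← hN0]
        positivity
      · nlinarith [h1, h2, h3, h3', h4, h5, hNpos]
    -- surjectivity
    have hsurj : Function.Surjective J := by
      intro f
      rcases eq_or_ne f 0 with rfl | hf
      · exact ⟨0, hJzero⟩
      · obtain ⟨z, hz1, hz2⟩ := atdm_attain n hn a b ha hb hab f hf
        refine ⟨‖f‖ • z, ?_⟩
        have hx : ‖(‖f‖ • z)‖ = ‖f‖ := by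
          rw [norm_smul, Real.norm_eq_abs, abs_of_nonneg (norm_nonneg f), hz1, mul_one]
        have h1 : f (‖f‖ • z) = ‖(‖f‖ • z)‖ ^ 2 := by
          rw [map_smul, smul_eq_mul, hz2, hx]
          ring
        have h2 : ‖f‖ = ‖(‖f‖ • z)‖ := hx.symm
        exact (hpart1 (‖f‖ • z)).unique ⟨(hJ _).1, (hJ _).2⟩ ⟨h1, h2⟩
    have hinj : Function.Injective J := by
      intro u v huv
      have h := hcoL u v
      rw [huv, sub_self, norm_zero, mul_zero] at h
      have : ‖u - v‖ = 0 := le_antisymm h (norm_nonneg _)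
      rwa [norm_eq_zero, sub_eq_zero] at this
    exact ⟨⟨hinj, hsurj⟩, ⟨K ^ 2, by positivity, hlip⟩, ⟨K ^ 2, by positivity, hcoL⟩⟩

/-- on an almost transitive renorming of a Hilbert space the duality map is
well defined and is a Lipschitz bijection with Lipschitz inverse between `X` and `X*`. -/
theorem AT_renorming_duality_map_lipschitz_equivalence
    {X : Type*} [NormedAddCommGroup X] [NormedSpace ℝ X] [CompleteSpace X]
    (hren : IsHilbertRenorming X)
    (hAT : ∀ x y : X, ‖x‖ = 1 → ‖y‖ = 1 → ∀ ε > (0 : ℝ),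
      ∃ T : X →L[ℝ] X, Function.Surjective T ∧ (∀ z : X, ‖T z‖ = ‖z‖) ∧ ‖y - T x‖ ≤ ε) :
    (∀ x : X, ∃! f : X →L[ℝ] ℝ, f x = ‖x‖ ^ 2 ∧ ‖f‖ = ‖x‖) ∧
    (∀ J : X → (X →L[ℝ] ℝ), (∀ x : X, J x x = ‖x‖ ^ 2 ∧ ‖J x‖ = ‖x‖) →
      Function.Bijective J ∧
      (∃ L > (0 : ℝ), ∀ x y : X, ‖J x - J y‖ ≤ L * ‖x - y‖) ∧
      (∃ L > (0 : ℝ), ∀ x y : X, ‖x - y‖ ≤ L * ‖J x - J y‖)) :=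
  AT_renorming_duality_map_lipschitz_equivalence' hren hAT
end

section
/- Let X be an almost transitive Banach space whose norm is equivalent to a norm induced by an inner product (an almost transitive renorming of a Hilbert space). Then every point of the unit sphere of X admits both an inner ellipsoid and an outer ellipsoid. -/
/-!
Let `n` be an equivalent Euclidean norm and `c`, `d` the infimum and supremum of `n` on the unit
sphere. For a linear isometry `T`, `n ∘ T` is again Euclidean with the same bounds as `n`, and
almost transitivity makes the values `n (T x)` accumulate at every value of `n` on the sphere, in
particular at `c` and at `d`. An ultralimit `m` of such norms `n ∘ T` is Euclidean, since the
parallelogram law passes to limits, it keeps the bounds of the `n ∘ T`, and `m x` is `c`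
(resp. `d`). Then `m / c` is an inner and `m / d` an outer ellipsoid at `x`.
-/

open Filter Topology Set Metric

theorem IsCompact.exists_tendsto_ultrafilter {ι Y : Type*} [TopologicalSpace Y] {s : Set Y}
    (hs : IsCompact s) (U : Ultrafilter ι) {f : ι → Y} (hf : ∀ i, f i ∈ s) :
    ∃ L ∈ s, Tendsto f U (𝓝 L) :=
  hs.ultrafilter_le_nhds' (U.map f) (Ultrafilter.mem_map.2 (univ_mem' hf))

theorem inv_norm_smul_mem_sphere {X : Type*} [NormedAddCommGroup X] [NormedSpace ℝ X] {z : X}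
    (hz : z ≠ 0) : ‖z‖⁻¹ • z ∈ sphere (0 : X) 1 :=
  mem_sphere_zero_iff_norm.2 <| by
    rw [norm_smul, norm_inv, norm_norm, inv_mul_cancel₀ (norm_ne_zero_iff.2 hz)]

namespace IsEuclideanNorm

section AddCommGroup

variable {X : Type*} [AddCommGroup X] [Module ℝ X] {n : X → ℝ}

theorem map_zero (hn : IsEuclideanNorm n) : n 0 = 0 :=
  (hn.2.1 0).2 rfl

theorem map_neg (hn : IsEuclideanNorm n) (z : X) : n (-z) = n z := by
  simpa using hn.2.2.1 (-1) z

theorem abs_sub_le (hn : IsEuclideanNorm n) (u v : X) : |n u - n v| ≤ n (u - v) := by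
  have hu := hn.2.2.2.1 v (u - v)
  have hv := hn.2.2.2.1 u (v - u)
  rw [add_sub_cancel] at hu
  rw [add_sub_cancel, ← neg_sub, hn.map_neg] at hv
  exact abs_sub_le_iff.2 ⟨by linarith, by linarith⟩

theorem const_mul (hn : IsEuclideanNorm n) {c : ℝ} (hc : 0 < c) :
    IsEuclideanNorm fun z => c * n z := by
  obtain ⟨h_nonneg, h_eq_zero, h_smul, h_triangle, h_parallelogram⟩ := hn
  refine ⟨fun z => mul_nonneg hc.le (h_nonneg z), fun z => ?_, fun a z => ?_,
    fun u v => ?_, fun u v => ?_⟩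
  · rw [mul_eq_zero, h_eq_zero, or_iff_right hc.ne']
  · dsimp only; rw [h_smul]; ring
  · linarith [mul_le_mul_of_nonneg_left (h_triangle u v) hc.le]
  · linear_combination c ^ 2 * h_parallelogram u v

theorem comp_injective {Y : Type*} [AddCommGroup Y] [Module ℝ Y] {n : Y → ℝ}
    (hn : IsEuclideanNorm n) (T : X →ₗ[ℝ] Y) (hT : Function.Injective T) :
    IsEuclideanNorm fun z => n (T z) := by
  obtain ⟨h_nonneg, h_eq_zero, h_smul, h_triangle, h_parallelogram⟩ := hn
  refine ⟨fun z => h_nonneg _, fun z => ?_, fun c z => ?_, fun u v => ?_, fun u v => ?_⟩ <;>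
    dsimp only
  · rw [h_eq_zero, map_eq_zero_iff T hT]
  · rw [map_smul, h_smul]
  · rw [map_add]; exact h_triangle _ _
  · rw [map_add, map_sub]; exact h_parallelogram _ _

theorem of_tendsto {ι : Type*} {l : Filter ι} [l.NeBot] {N : ι → X → ℝ} {m : X → ℝ}
    (hN : ∀ i, IsEuclideanNorm (N i)) (hm : ∀ z, Tendsto (fun i => N i z) l (𝓝 (m z)))
    (hdef : ∀ z, m z = 0 → z = 0) : IsEuclideanNorm m := by
  refine ⟨fun z => ge_of_tendsto' (hm z) fun i => (hN i).1 z, fun z => ⟨hdef z, ?_⟩,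
    fun c z => ?_, fun u v => ?_, fun u v => ?_⟩
  · rintro rfl
    exact tendsto_nhds_unique (hm 0) (by simp only [fun i => (hN i).map_zero, tendsto_const_nhds])
  · refine tendsto_nhds_unique (hm (c • z)) ?_
    simpa only [(hN _).2.2.1] using (hm z).const_mul |c|
  · exact le_of_tendsto_of_tendsto' (hm (u + v)) ((hm u).add (hm v)) fun i => (hN i).2.2.2.1 u v
  · refine tendsto_nhds_unique (((hm (u + v)).pow 2).add ((hm (u - v)).pow 2)) ?_
    simpa only [(hN _).2.2.2.2] using
      (((hm u).pow 2).const_mul 2).add (((hm v).pow 2).const_mul 2)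

end AddCommGroup

section Normed

variable {X : Type*} [NormedAddCommGroup X] [NormedSpace ℝ X] {n : X → ℝ}

theorem continuous (hn : IsEuclideanNorm n) {b : ℝ} (hb : ∀ z, n z ≤ b * ‖z‖) :
    Continuous n :=
  (LipschitzWith.of_dist_le' (K := b) fun u v => by
    simpa only [Real.dist_eq, dist_eq_norm, Real.norm_eq_abs] using
      (hn.abs_sub_le u v).trans (hb _)).continuous

theorem mul_norm_le_of_forall_sphere (hn : IsEuclideanNorm n) {c : ℝ}
    (h : ∀ z ∈ sphere (0 : X) 1, c ≤ n z) (z : X) : c * ‖z‖ ≤ n z := by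
  rcases eq_or_ne z 0 with rfl | hz
  · simp [hn.map_zero]
  · have hz_pos : 0 < ‖z‖ := norm_pos_iff.2 hz
    have := h _ (inv_norm_smul_mem_sphere hz)
    rwa [hn.2.2.1, abs_of_pos (inv_pos.2 hz_pos), le_inv_mul_iff₀' hz_pos] at this

theorem le_mul_norm_of_forall_sphere (hn : IsEuclideanNorm n) {c : ℝ}
    (h : ∀ z ∈ sphere (0 : X) 1, n z ≤ c) (z : X) : n z ≤ c * ‖z‖ := by
  rcases eq_or_ne z 0 with rfl | hz
  · simp [hn.map_zero]
  · have hz_pos : 0 < ‖z‖ := norm_pos_iff.2 hz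
    have := h _ (inv_norm_smul_mem_sphere hz)
    rwa [hn.2.2.1, abs_of_pos (inv_pos.2 hz_pos), inv_mul_le_iff₀' hz_pos] at this

end Normed

end IsEuclideanNorm

section Limits

variable {X : Type*} [NormedAddCommGroup X] [Module ℝ X]

theorem exists_isEuclideanNorm_of_tendsto {ι : Type*} {l : Filter ι} [l.NeBot]
    {N : ι → X → ℝ} (hN : ∀ i, IsEuclideanNorm (N i)) {lo hi : ℝ} (hlo : 0 < lo)
    (hlow : ∀ i z, lo * ‖z‖ ≤ N i z) (hhigh : ∀ i z, N i z ≤ hi * ‖z‖) {x : X} {r : ℝ}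
    (hx : Tendsto (fun i => N i x) l (𝓝 r)) :
    ∃ m : X → ℝ, IsEuclideanNorm m ∧ (∀ z, lo * ‖z‖ ≤ m z) ∧ (∀ z, m z ≤ hi * ‖z‖) ∧
      m x = r := by
  set U := Ultrafilter.of l
  have hbounds (z : X) (i : ι) : N i z ∈ Icc (lo * ‖z‖) (hi * ‖z‖) := ⟨hlow i z, hhigh i z⟩
  choose m _ hm using fun z => isCompact_Icc.exists_tendsto_ultrafilter U (hbounds z)
  have hmlow (z : X) : lo * ‖z‖ ≤ m z := ge_of_tendsto' (hm z) fun i => hlow i z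
  have hdef (z : X) (hz : m z = 0) : z = 0 := by
    have := hmlow z
    rw [hz] at this
    exact norm_le_zero_iff.1 (nonpos_of_mul_nonpos_right this hlo)
  exact ⟨m, IsEuclideanNorm.of_tendsto hN hm hdef, hmlow,
    fun z => le_of_tendsto' (hm z) fun i => hhigh i z,
    tendsto_nhds_unique (hm x) (hx.mono_left (Ultrafilter.of_le l))⟩

theorem exists_isEuclideanNorm_eq_of_mem_closure {n : X → ℝ} (hn : IsEuclideanNorm n)
    {lo hi : ℝ} (hlo : 0 < lo) (hlow : ∀ z, lo * ‖z‖ ≤ n z) (hhigh : ∀ z, n z ≤ hi * ‖z‖)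
    {x : X} {r : ℝ} (hr : r ∈ closure (range fun T : X →ₗᵢ[ℝ] X => n (T x))) :
    ∃ m : X → ℝ, IsEuclideanNorm m ∧ (∀ z, lo * ‖z‖ ≤ m z) ∧ (∀ z, m z ≤ hi * ‖z‖) ∧
      m x = r := by
  have : (comap (fun T : X →ₗᵢ[ℝ] X => n (T x)) (𝓝 r)).NeBot :=
    comap_neBot_iff.2 fun t ht => by
      obtain ⟨_, hts, T, rfl⟩ := mem_closure_iff_nhds.1 hr t ht
      exact ⟨T, hts⟩
  refine exists_isEuclideanNorm_of_tendsto (N := fun (T : X →ₗᵢ[ℝ] X) z => n (T z))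
    (fun T => hn.comp_injective T.toLinearMap T.injective)
    hlo (fun T z => ?_) (fun T z => ?_) tendsto_comap
  · simpa only [T.norm_map] using hlow (T z)
  · simpa only [T.norm_map] using hhigh (T z)

end Limits

section Ellipsoids

variable {X : Type*} [NormedAddCommGroup X] [Module ℝ X] {m : X → ℝ}

theorem innerEllipsoidAt_of_bounds (hm : IsEuclideanNorm m) {c b : ℝ} (hc : 0 < c) (hb : 0 < b)
    (hlow : ∀ z, c * ‖z‖ ≤ m z) (hhigh : ∀ z, m z ≤ b * ‖z‖) {x : X} (hx : m x = c) :
    InnerEllipsoidAt x :=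
  ⟨fun z => c⁻¹ * m z, hm.const_mul (inv_pos.2 hc),
    ⟨c⁻¹ * b, by positivity, fun z => by
      rw [mul_assoc]; exact mul_le_mul_of_nonneg_left (hhigh z) (inv_nonneg.2 hc.le)⟩,
    fun z => (le_inv_mul_iff₀ hc).2 (hlow z), by simp only [hx, inv_mul_cancel₀ hc.ne']⟩

theorem outerEllipsoidAt_of_bounds (hm : IsEuclideanNorm m) {a d : ℝ} (ha : 0 < a) (hd : 0 < d)
    (hlow : ∀ z, a * ‖z‖ ≤ m z) (hhigh : ∀ z, m z ≤ d * ‖z‖) {x : X} (hx : m x = d) :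
    OuterEllipsoidAt x :=
  ⟨fun z => d⁻¹ * m z, hm.const_mul (inv_pos.2 hd),
    ⟨d⁻¹ * a, by positivity, fun z => by
      rw [mul_assoc]; exact mul_le_mul_of_nonneg_left (hlow z) (inv_nonneg.2 hd.le)⟩,
    fun z => (inv_mul_le_iff₀ hd).2 (hhigh z), by simp only [hx, inv_mul_cancel₀ hd.ne']⟩

end Ellipsoids

theorem sphere_subset_closure_range_isometry_apply {X : Type*} [NormedAddCommGroup X]
    [NormedSpace ℝ X] {x : X}
    (hx : ∀ y : X, ‖y‖ = 1 → ∀ ε > (0 : ℝ),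
      ∃ T : X →L[ℝ] X, (∀ z : X, ‖T z‖ = ‖z‖) ∧ ‖y - T x‖ ≤ ε) :
    sphere (0 : X) 1 ⊆ closure (range fun T : X →ₗᵢ[ℝ] X => T x) := by
  intro y hy
  refine Metric.mem_closure_range_iff.2 fun ε hε => ?_
  obtain ⟨T, hT, hTx⟩ := hx y (mem_sphere_zero_iff_norm.1 hy) (ε / 2) (half_pos hε)
  exact ⟨⟨T.toLinearMap, hT⟩, by rw [dist_eq_norm]; exact hTx.trans_lt (half_lt_self hε)⟩

theorem AT_renorming_ellipsoids_everywhere_general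
    {X : Type*} [NormedAddCommGroup X] [NormedSpace ℝ X]
    (hren : IsHilbertRenorming X)
    (hAT : ∀ x y : X, ‖x‖ = 1 → ‖y‖ = 1 → ∀ ε > (0 : ℝ),
      ∃ T : X →L[ℝ] X, Function.Surjective T ∧ (∀ z : X, ‖T z‖ = ‖z‖) ∧ ‖y - T x‖ ≤ ε) :
    ∀ x : X, ‖x‖ = 1 → InnerEllipsoidAt x ∧ OuterEllipsoidAt x := by
  intro x hx
  obtain ⟨n, hn, a, ha, b, hb, hab⟩ := hren
  have hlow (z : X) : a * ‖z‖ ≤ n z := (hab z).1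
  have hhigh (z : X) : n z ≤ b * ‖z‖ := (hab z).2
  set S := n '' sphere (0 : X) 1
  have hxS : n x ∈ S := mem_image_of_mem n (mem_sphere_zero_iff_norm.2 hx)
  have hS_ge : ∀ t ∈ S, a ≤ t := forall_mem_image.2 fun z hz => by
    simpa [mem_sphere_zero_iff_norm.1 hz] using hlow z
  have hS_le : ∀ t ∈ S, t ≤ b := forall_mem_image.2 fun z hz => by
    simpa [mem_sphere_zero_iff_norm.1 hz] using hhigh z
  have hS_closure : closure S ⊆ closure (range fun T : X →ₗᵢ[ℝ] X => n (T x)) := by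
    have hsphere := sphere_subset_closure_range_isometry_apply fun y hy ε hε =>
      let ⟨T, _, hT, hTx⟩ := hAT x y hx hy ε hε; ⟨T, hT, hTx⟩
    refine closure_minimal ?_ isClosed_closure
    rw [range_comp' n]
    exact (image_mono hsphere).trans (image_closure_subset_closure_image (hn.continuous hhigh))
  constructor
  · have hc : 0 < sInf S := ha.trans_le (le_csInf ⟨_, hxS⟩ hS_ge)
    obtain ⟨m, hm, hmlow, hmhigh, hmx⟩ := exists_isEuclideanNorm_eq_of_mem_closure hn hc
      (hn.mul_norm_le_of_forall_sphere fun z hz => csInf_le ⟨a, hS_ge⟩ (mem_image_of_mem n hz))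
      hhigh (hS_closure (csInf_mem_closure ⟨_, hxS⟩ ⟨a, hS_ge⟩))
    exact innerEllipsoidAt_of_bounds hm hc hb hmlow hmhigh hmx
  · have hd : 0 < sSup S := ha.trans_le ((hS_ge _ hxS).trans (le_csSup ⟨b, hS_le⟩ hxS))
    obtain ⟨m, hm, hmlow, hmhigh, hmx⟩ := exists_isEuclideanNorm_eq_of_mem_closure hn ha hlow
      (hn.le_mul_norm_of_forall_sphere fun z hz => le_csSup ⟨b, hS_le⟩ (mem_image_of_mem n hz))
      (hS_closure (csSup_mem_closure ⟨_, hxS⟩ ⟨b, hS_le⟩))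
    exact outerEllipsoidAt_of_bounds hm ha hd hmlow hmhigh hmx

/-- every point of the unit sphere of an almost transitive renorming of a
Hilbert space admits both an inner ellipsoid and an outer ellipsoid. -/
theorem AT_renorming_ellipsoids_everywhere
    {X : Type*} [NormedAddCommGroup X] [NormedSpace ℝ X] [CompleteSpace X]
    (hren : IsHilbertRenorming X)
    (hAT : ∀ x y : X, ‖x‖ = 1 → ‖y‖ = 1 → ∀ ε > (0 : ℝ),
      ∃ T : X →L[ℝ] X, Function.Surjective T ∧ (∀ z : X, ‖T z‖ = ‖z‖) ∧ ‖y - T x‖ ≤ ε) :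
    ∀ x : X, ‖x‖ = 1 → InnerEllipsoidAt x ∧ OuterEllipsoidAt x :=
  AT_renorming_ellipsoids_everywhere_general hren hAT
end
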